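/- arXiv:1410.4287 — 9 statements merged into one kernel-verified Lean document; each statement's English description precedes it below -/
import Mathlib

section
/- Let c₁,…,c_s be distinct real numbers, let u₁,…,u_s : ℝ → ℝ be twice differentiable, let t ∈ ℝ and h ≠ 0, and suppose the matrix F(t,h) is nonsingular. Then there exists exactly one triple (A, b, d) ∈ ℝ^{s×s} × ℝ^s × ℝ^s satisfying, for every k = 1,…,s: u_k(t+h) = u_k(t) + h·u_k'(t) + h²·Σ_{j=1}^s b_j·u_k''(t+c_j h); u_k'(t+h) = u_k'(t) + h·Σ_{j=1}^s d_j·u_k''(t+c_j h); and u_k(t+c_i h) = u_k(t) + c_i h·u_k'(t) + h²·Σ_{j=1}^s a_{ij}·u_k''(t+c_j h) for all i = 1,…,s. Moreover A = h^{-2}·E(t,h)·F(t,h)^{-1}. -/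
open Matrix BigOperators

/-!
Each group of fitting conditions says that a row vector `x` (namely `b`, `d`, or a row of `A`)
solves `x F = r⁻¹ (y - a)` with `r = h` or `r = h²`. As `F` is invertible, each has the unique
solution `r⁻¹ (y - a) F⁻¹`, and for the `i`-th row of `A` the vector `y - a` is the `i`-th row
of `E`, whence `A = h⁻² E F⁻¹`.
-/

/-- The fitting conditions defining the coefficients `(A, b, d)` of an `s`-stage FRKN method
with respect to basis functions `u₁, …, u_s` and collocation parameters `c₁, …, c_s`,
at time `t` with stepsize `h`. -/
def FRKNfit (s : ℕ) (c : Fin s → ℝ) (u : Fin s → ℝ → ℝ) (t h : ℝ)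
    (p : Matrix (Fin s) (Fin s) ℝ × (Fin s → ℝ) × (Fin s → ℝ)) : Prop :=
  ∀ k : Fin s,
    (u k (t + h) = u k t + h * deriv (u k) t +
      h ^ 2 * ∑ j, p.2.1 j * deriv (deriv (u k)) (t + c j * h)) ∧
    (deriv (u k) (t + h) = deriv (u k) t +
      h * ∑ j, p.2.2 j * deriv (deriv (u k)) (t + c j * h)) ∧
    (∀ i, u k (t + c i * h) = u k t + c i * h * deriv (u k) t +
      h ^ 2 * ∑ j, p.1 i j * deriv (deriv (u k)) (t + c j * h))

section RowSystem

variable {n K : Type*} [Fintype n] [DecidableEq n] [Field K] {F : Matrix n n K}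

theorem vecMul_eq_iff_eq_vecMul_nonsing_inv (hF : IsUnit F.det) (x y : n → K) :
    x ᵥ* F = y ↔ x = y ᵥ* F⁻¹ := by
  constructor
  · rintro rfl
    rw [vecMul_vecMul, mul_nonsing_inv _ hF, vecMul_one]
  · rintro rfl
    rw [vecMul_vecMul, nonsing_inv_mul _ hF, vecMul_one]

theorem forall_eq_add_mul_vecMul_iff {r : K} (hr : r ≠ 0) (hF : IsUnit F.det)
    (x y a : n → K) :
    (∀ k, y k = a k + r * (x ᵥ* F) k) ↔ x = (fun k => r⁻¹ * (y k - a k)) ᵥ* F⁻¹ := by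
  rw [← vecMul_eq_iff_eq_vecMul_nonsing_inv hF, funext_iff]
  refine forall_congr' fun k => ?_
  rw [eq_inv_mul_iff_mul_eq₀ hr, eq_sub_iff_add_eq', eq_comm]

end RowSystem

noncomputable section Collocation

variable {s : ℕ} (c : Fin s → ℝ) (u : Fin s → ℝ → ℝ) (t h : ℝ)

/-- `E(t,h)` in the notation of the statement. -/
def collocationDefect : Matrix (Fin s) (Fin s) ℝ :=
  of fun i k => u k (t + c i * h) - u k t - c i * h * deriv (u k) t

/-- `F(t,h)` in the notation of the statement. -/
def collocationSecondDeriv : Matrix (Fin s) (Fin s) ℝ :=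
  of fun i k => deriv (deriv (u k)) (t + c i * h)

def frknCoeffs : Matrix (Fin s) (Fin s) ℝ × (Fin s → ℝ) × (Fin s → ℝ) :=
  ((h ^ 2)⁻¹ • (collocationDefect c u t h * (collocationSecondDeriv c u t h)⁻¹),
    (fun k => (h ^ 2)⁻¹ * (u k (t + h) - (u k t + h * deriv (u k) t))) ᵥ*
      (collocationSecondDeriv c u t h)⁻¹,
    (fun k => h⁻¹ * (deriv (u k) (t + h) - deriv (u k) t)) ᵥ*
      (collocationSecondDeriv c u t h)⁻¹)

theorem frknFit_iff_eq_frknCoeffs (hh : h ≠ 0)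
    (hF : IsUnit (collocationSecondDeriv c u t h).det)
    (p : Matrix (Fin s) (Fin s) ℝ × (Fin s → ℝ) × (Fin s → ℝ)) :
    FRKNfit s c u t h p ↔ p = frknCoeffs c u t h := by
  obtain ⟨A, b, d⟩ := p
  have hh2 : h ^ 2 ≠ 0 := pow_ne_zero 2 hh
  have hA : (∀ i k, u k (t + c i * h) = u k t + c i * h * deriv (u k) t +
        h ^ 2 * ∑ j, A i j * deriv (deriv (u k)) (t + c j * h)) ↔
      A = (h ^ 2)⁻¹ • (collocationDefect c u t h * (collocationSecondDeriv c u t h)⁻¹) := by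
    refine Iff.trans ?_ funext_iff.symm
    refine forall_congr' fun i => (forall_eq_add_mul_vecMul_iff hh2 hF _ _ _).trans ?_
    congr! 1
    ext k
    simp only [collocationDefect, vecMul, dotProduct, Matrix.smul_apply, Matrix.mul_apply,
      of_apply, smul_eq_mul, Finset.mul_sum, mul_assoc, sub_sub]
  simp only [FRKNfit, forall_and]
  rw [forall_comm (β := Fin s), frknCoeffs, Prod.mk.injEq, Prod.mk.injEq]
  exact (and_congr (forall_eq_add_mul_vecMul_iff hh2 hF b _ _)
    (and_congr (forall_eq_add_mul_vecMul_iff hh hF d _ _) hA)).trans and_rotate.symm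

end Collocation

theorem stmt_0_general (s : ℕ) (c : Fin s → ℝ)
    (u : Fin s → ℝ → ℝ)
    (t h : ℝ) (hh : h ≠ 0)
    (E F : Matrix (Fin s) (Fin s) ℝ)
    (hE : E = Matrix.of fun i k : Fin s =>
      u k (t + c i * h) - u k t - c i * h * deriv (u k) t)
    (hF : F = Matrix.of fun i k : Fin s => deriv (deriv (u k)) (t + c i * h))
    (hFinv : IsUnit F.det) :
    (∃! p : Matrix (Fin s) (Fin s) ℝ × (Fin s → ℝ) × (Fin s → ℝ),
        FRKNfit s c u t h p) ∧
    (∀ p : Matrix (Fin s) (Fin s) ℝ × (Fin s → ℝ) × (Fin s → ℝ),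
        FRKNfit s c u t h p → p.1 = (h ^ 2)⁻¹ • (E * F⁻¹)) := by
  subst hE hF
  have hfit := frknFit_iff_eq_frknCoeffs c u t h hh hFinv
  refine ⟨?_, fun p hp => by rw [(hfit p).1 hp]; rfl⟩
  simpa only [hfit] using existsUnique_eq

theorem stmt_0 (s : ℕ) (c : Fin s → ℝ) (hc : Function.Injective c)
    (u : Fin s → ℝ → ℝ)
    (hu : ∀ k, Differentiable ℝ (u k) ∧ Differentiable ℝ (deriv (u k)))
    (t h : ℝ) (hh : h ≠ 0)
    (E F : Matrix (Fin s) (Fin s) ℝ)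
    (hE : E = Matrix.of fun i k : Fin s =>
      u k (t + c i * h) - u k t - c i * h * deriv (u k) t)
    (hF : F = Matrix.of fun i k : Fin s => deriv (deriv (u k)) (t + c i * h))
    (hFinv : IsUnit F.det) :
    (∃! p : Matrix (Fin s) (Fin s) ℝ × (Fin s → ℝ) × (Fin s → ℝ),
        FRKNfit s c u t h p) ∧
    (∀ p : Matrix (Fin s) (Fin s) ℝ × (Fin s → ℝ) × (Fin s → ℝ),
        FRKNfit s c u t h p → p.1 = (h ^ 2)⁻¹ • (E * F⁻¹)) :=
  stmt_0_general s c u t h hh E F hE hF hFinv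
end

section
/- Let c₁,…,c_s be distinct real numbers, let u₁,…,u_s : ℝ → ℝ be differentiable, let t₀ ∈ ℝ and h ≠ 0 be such that the matrix E(t₀,h) is nonsingular, and let y₀, y₀', y₁, …, y_s ∈ ℝ be given. Then there exist (unique) real coefficients α₀, a₀, a₁, …, a_s such that the function φ(t) = α₀ + a₀·t + Σ_{k=1}^s a_k·u_k(t) satisfies φ(t₀) = y₀, φ'(t₀) = y₀', and φ(t₀ + c_i h) = y_i for i = 1,…,s. -/
/-! Writing `φ = α₀ + a₀ t + ∑ aₖ uₖ`, the condition `φ(t₀) = y₀` fixes `α₀` and `φ'(t₀) = y₀'`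
fixes `a₀`, both in terms of `a = (aₖ)`. The affine part cancels from the Taylor defect
`φ(t₀ + cᵢh) - φ(t₀) - cᵢh φ'(t₀)`, which is `(E a)ᵢ`; so the remaining conditions read
`E a = (yᵢ - y₀ - cᵢh y₀')ᵢ`, uniquely solvable since `E` is nonsingular. -/

open Matrix BigOperators

namespace Collocation

variable {s : ℕ} (u : Fin s → ℝ → ℝ)

def trialFun (p : ℝ × ℝ × (Fin s → ℝ)) (x : ℝ) : ℝ :=
  p.1 + p.2.1 * x + ∑ k, p.2.2 k * u k x

/-- The matrix `E(t, h)`. -/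
noncomputable def defectMatrix (c : Fin s → ℝ) (t h : ℝ) : Matrix (Fin s) (Fin s) ℝ :=
  Matrix.of fun i k => u k (t + c i * h) - u k t - c i * h * deriv (u k) t

variable {u}

theorem deriv_trialFun (hu : ∀ k, Differentiable ℝ (u k)) (p : ℝ × ℝ × (Fin s → ℝ)) (x : ℝ) :
    deriv (trialFun u p) x = p.2.1 + ∑ k, p.2.2 k * deriv (u k) x := by
  have hlin : HasDerivAt (fun t : ℝ => p.1 + p.2.1 * t) p.2.1 x := by
    simpa using ((hasDerivAt_id x).const_mul p.2.1).const_add p.1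
  have hsum : HasDerivAt (fun t => ∑ k, p.2.2 k * u k t) (∑ k, p.2.2 k * deriv (u k) x) x :=
    HasDerivAt.fun_sum fun k _ => (hu k x).hasDerivAt.const_mul (p.2.2 k)
  exact (hlin.add hsum).deriv

theorem defectMatrix_mulVec (c : Fin s → ℝ) (t h : ℝ) (p : ℝ × ℝ × (Fin s → ℝ)) (i : Fin s) :
    (defectMatrix u c t h *ᵥ p.2.2) i =
      trialFun u p (t + c i * h) - trialFun u p t
        - c i * h * (p.2.1 + ∑ k, p.2.2 k * deriv (u k) t) := by
  calc (defectMatrix u c t h *ᵥ p.2.2) i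
      = ∑ k, p.2.2 k * (u k (t + c i * h) - u k t - c i * h * deriv (u k) t) := by
        simp only [defectMatrix, mulVec, dotProduct, of_apply, mul_comm]
    _ = _ := by
        simp only [trialFun, mul_sub, mul_add, Finset.sum_sub_distrib, Finset.mul_sum,
          mul_left_comm (c i * h)]
        ring

theorem trialFun_conditions_iff (hu : ∀ k, Differentiable ℝ (u k)) (c : Fin s → ℝ)
    (t₀ h y₀ y₀' : ℝ) (y : Fin s → ℝ) (p : ℝ × ℝ × (Fin s → ℝ)) :
    (trialFun u p t₀ = y₀ ∧ deriv (trialFun u p) t₀ = y₀' ∧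
        ∀ i, trialFun u p (t₀ + c i * h) = y i) ↔
      defectMatrix u c t₀ h *ᵥ p.2.2 = (fun i => y i - y₀ - c i * h * y₀') ∧
        p.2.1 = y₀' - ∑ k, p.2.2 k * deriv (u k) t₀ ∧
        p.1 = y₀ - p.2.1 * t₀ - ∑ k, p.2.2 k * u k t₀ := by
  simp only [deriv_trialFun hu, funext_iff, defectMatrix_mulVec]
  constructor
  · rintro ⟨hval, hder, hcoll⟩
    refine ⟨fun i => by rw [hval, hder, hcoll], by linarith, ?_⟩
    simp only [trialFun] at hval
    linarith
  · rintro ⟨hdefect, hb, ha⟩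
    have hval : trialFun u p t₀ = y₀ := by simp only [trialFun]; linarith
    have hder : p.2.1 + ∑ k, p.2.2 k * deriv (u k) t₀ = y₀' := by linarith
    refine ⟨hval, hder, fun i => ?_⟩
    have := hdefect i
    rw [hval, hder] at this
    linarith

end Collocation

open Collocation in
theorem stmt_1_general (s : ℕ) (c : Fin s → ℝ)
    (u : Fin s → ℝ → ℝ) (hu : ∀ k, Differentiable ℝ (u k))
    (t₀ h : ℝ)
    (hE : IsUnit (Matrix.of fun i k : Fin s =>
      u k (t₀ + c i * h) - u k t₀ - c i * h * deriv (u k) t₀).det)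
    (y₀ y₀' : ℝ) (y : Fin s → ℝ) :
    ∃! p : ℝ × ℝ × (Fin s → ℝ),
      (fun x => p.1 + p.2.1 * x + ∑ k, p.2.2 k * u k x) t₀ = y₀ ∧
      deriv (fun x => p.1 + p.2.1 * x + ∑ k, p.2.2 k * u k x) t₀ = y₀' ∧
      ∀ i, (fun x => p.1 + p.2.1 * x + ∑ k, p.2.2 k * u k x) (t₀ + c i * h) = y i := by
  have hbij : Function.Bijective (defectMatrix u c t₀ h).mulVec :=
    have hunit := (isUnit_iff_isUnit_det _).2 hE
    ⟨mulVec_injective_of_isUnit hunit, mulVec_surjective_iff_isUnit.2 hunit⟩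
  obtain ⟨a, ha, ha_unique⟩ := hbij.existsUnique fun i => y i - y₀ - c i * h * y₀'
  set b₀ := y₀' - ∑ k, a k * deriv (u k) t₀
  refine ⟨(y₀ - b₀ * t₀ - ∑ k, a k * u k t₀, b₀, a),
    (trialFun_conditions_iff hu c t₀ h y₀ y₀' y _).2 ⟨ha, rfl, rfl⟩, ?_⟩
  rintro ⟨α₀, a₀, a'⟩ hp
  obtain ⟨ha', ha₀, hα₀⟩ := (trialFun_conditions_iff hu c t₀ h y₀ y₀' y _).1 hp
  obtain rfl : a' = a := ha_unique a' ha'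
  obtain rfl : a₀ = b₀ := ha₀
  exact Prod.ext hα₀ rfl

theorem stmt_1 (s : ℕ) (c : Fin s → ℝ) (hc : Function.Injective c)
    (u : Fin s → ℝ → ℝ) (hu : ∀ k, Differentiable ℝ (u k))
    (t₀ h : ℝ) (hh : h ≠ 0)
    (hE : IsUnit (Matrix.of fun i k : Fin s =>
      u k (t₀ + c i * h) - u k t₀ - c i * h * deriv (u k) t₀).det)
    (y₀ y₀' : ℝ) (y : Fin s → ℝ) :
    ∃! p : ℝ × ℝ × (Fin s → ℝ),
      (fun x => p.1 + p.2.1 * x + ∑ k, p.2.2 k * u k x) t₀ = y₀ ∧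
      deriv (fun x => p.1 + p.2.1 * x + ∑ k, p.2.2 k * u k x) t₀ = y₀' ∧
      ∀ i, (fun x => p.1 + p.2.1 * x + ∑ k, p.2.2 k * u k x) (t₀ + c i * h) = y i :=
  stmt_1_general s c u hu t₀ h hE y₀ y₀' y
end

section
/- Let c₁,…,c_s be distinct real numbers, u₁,…,u_s : ℝ → ℝ twice differentiable, t₀ ∈ ℝ, h ≠ 0 with E(t₀,h) nonsingular, and let A = (a_{ij}) ∈ ℝ^{s×s} be a nonsingular matrix satisfying u_k(t₀+c_i h) = u_k(t₀) + c_i h·u_k'(t₀) + h²·Σ_{j=1}^s a_{ij}·u_k''(t₀+c_j h) for all i,k = 1,…,s. Let f : ℝ × ℝ → ℝ, y₀, y₀' ∈ ℝ, and suppose Y = (Y₁,…,Y_s) ∈ ℝ^s satisfies the stage equations Y_i = y₀ + h c_i y₀' + h²·Σ_{j=1}^s a_{ij}·f(t₀+c_j h, Y_j) for i = 1,…,s. Then there exists a function u in the linear span of {1, t, u₁(t), …, u_s(t)} such that u(t₀) = y₀, u'(t₀) = y₀', u(t₀+c_i h) = Y_i, and u''(t₀+c_i h) = f(t₀+c_i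 h, u(t₀+c_i h)) for all i = 1,…,s. -/
/-!
The conditions on `A` say `E = h² A M` with `M_{jk} = u_k''(t₀ + c_j h)`, and the stage equations
say `Y - y₀ - c h y₀' = h² A F` with `F_j = f(t₀ + c_j h, Y_j)`. Take `a = E⁻¹ (Y - y₀ - c h y₀')`
and fix the affine part of `u = α₀ + a₀ t + ∑ a_k u_k` by the initial data. Then
`u(t₀ + c_i h) = y₀ + c_i h y₀' + (E a)_i = Y_i`, and `h² A M a = E a = h² A F` with `A`
invertible gives `M a = F`, i.e. `u''(t₀ + c_i h) = f(t₀ + c_i h, Y_i)`.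
-/

open Matrix BigOperators

section SpanFun

variable {ι : Type*} [Fintype ι]

def spanFun (α₀ a₀ : ℝ) (a : ι → ℝ) (u : ι → ℝ → ℝ) : ℝ → ℝ :=
  fun x => α₀ + a₀ * x + ∑ k, a k * u k x

theorem deriv_spanFun {u : ι → ℝ → ℝ} (hu : ∀ k, Differentiable ℝ (u k))
    (α₀ a₀ : ℝ) (a : ι → ℝ) :
    deriv (spanFun α₀ a₀ a u) = spanFun a₀ 0 a fun k => deriv (u k) := by
  funext x
  have hsum : HasDerivAt (fun x => ∑ k, a k * u k x) (∑ k, a k * deriv (u k) x) x :=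
    HasDerivAt.fun_sum fun k _ => ((hu k).differentiableAt.hasDerivAt).const_mul (a k)
  have hlin : HasDerivAt (fun x : ℝ => α₀ + a₀ * x) a₀ x := by
    simpa using ((hasDerivAt_id x).const_mul a₀).const_add α₀
  have h := (hlin.add hsum).deriv
  simp only [spanFun, zero_mul, add_zero]
  exact h

theorem deriv_deriv_spanFun {u : ι → ℝ → ℝ}
    (hu : ∀ k, Differentiable ℝ (u k) ∧ Differentiable ℝ (deriv (u k)))
    (α₀ a₀ : ℝ) (a : ι → ℝ) (x : ℝ) :
    deriv (deriv (spanFun α₀ a₀ a u)) x = ∑ k, a k * deriv (deriv (u k)) x := by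
  rw [deriv_spanFun (fun k => (hu k).1), deriv_spanFun (fun k => (hu k).2)]
  simp only [spanFun, zero_mul, add_zero, zero_add]

theorem spanFun_eq_taylor (α₀ a₀ : ℝ) (a : ι → ℝ) (u : ι → ℝ → ℝ) (t₀ t : ℝ) :
    spanFun α₀ a₀ a u t = spanFun α₀ a₀ a u t₀
      + (t - t₀) * spanFun a₀ 0 a (fun k => deriv (u k)) t₀
      + ∑ k, a k * (u k t - u k t₀ - (t - t₀) * deriv (u k) t₀) := by
  simp only [spanFun, zero_mul, add_zero, mul_sub, mul_add, Finset.sum_sub_distrib,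
    Finset.mul_sum, mul_left_comm (a _) (t - t₀)]
  ring

theorem exists_spanFun_initial {u : ι → ℝ → ℝ} (hu : ∀ k, Differentiable ℝ (u k))
    (t₀ y₀ y₀' : ℝ) (a : ι → ℝ) :
    ∃ α₀ a₀, spanFun α₀ a₀ a u t₀ = y₀ ∧ deriv (spanFun α₀ a₀ a u) t₀ = y₀' ∧
      ∀ t, spanFun α₀ a₀ a u t =
        y₀ + (t - t₀) * y₀' + ∑ k, a k * (u k t - u k t₀ - (t - t₀) * deriv (u k) t₀) := by
  set a₀ := y₀' - ∑ k, a k * deriv (u k) t₀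
  set α₀ := y₀ - a₀ * t₀ - ∑ k, a k * u k t₀
  have hinit : spanFun α₀ a₀ a u t₀ = y₀ := by simp only [spanFun, α₀]; ring
  have hinit' : spanFun a₀ 0 a (fun k => deriv (u k)) t₀ = y₀' := by simp [spanFun, a₀]
  refine ⟨α₀, a₀, hinit, by rw [deriv_spanFun hu, hinit'], fun t => ?_⟩
  rw [spanFun_eq_taylor _ _ _ _ t₀, hinit, hinit']

end SpanFun

theorem mulVec_eq_of_mulVec_eq_smul_mul {K n : Type*} [Field K] [Fintype n] [DecidableEq n]
    {r : K} (hr : r ≠ 0) {A M E : Matrix n n K} (hA : IsUnit A.det) (hE : E = r • (A * M))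
    {a v : n → K} (hEa : E *ᵥ a = r • (A *ᵥ v)) : M *ᵥ a = v := by
  have hAinj : Function.Injective A.mulVec :=
    mulVec_injective_iff_isUnit.2 ((isUnit_iff_isUnit_det A).2 hA)
  refine hAinj (smul_right_injective _ hr ?_)
  dsimp only
  rw [← hEa, hE, smul_mulVec, mulVec_mulVec]

theorem stmt_3_general (s : ℕ) (c : Fin s → ℝ)
    (u : Fin s → ℝ → ℝ)
    (hu : ∀ k, Differentiable ℝ (u k) ∧ Differentiable ℝ (deriv (u k)))
    (t₀ h : ℝ) (hh : h ≠ 0)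
    (hE : IsUnit (Matrix.of fun i k : Fin s =>
      u k (t₀ + c i * h) - u k t₀ - c i * h * deriv (u k) t₀).det)
    (A : Matrix (Fin s) (Fin s) ℝ) (hA : IsUnit A.det)
    (hAu : ∀ i k, u k (t₀ + c i * h) = u k t₀ + c i * h * deriv (u k) t₀ +
      h ^ 2 * ∑ j, A i j * deriv (deriv (u k)) (t₀ + c j * h))
    (f : ℝ → ℝ → ℝ) (y₀ y₀' : ℝ) (Y : Fin s → ℝ)
    (hY : ∀ i, Y i = y₀ + h * c i * y₀' +
      h ^ 2 * ∑ j, A i j * f (t₀ + c j * h) (Y j)) :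
    ∃ (α₀ a₀ : ℝ) (a : Fin s → ℝ),
      (fun x => α₀ + a₀ * x + ∑ k, a k * u k x) t₀ = y₀ ∧
      deriv (fun x => α₀ + a₀ * x + ∑ k, a k * u k x) t₀ = y₀' ∧
      (∀ i, (fun x => α₀ + a₀ * x + ∑ k, a k * u k x) (t₀ + c i * h) = Y i) ∧
      (∀ i, deriv (deriv (fun x => α₀ + a₀ * x + ∑ k, a k * u k x)) (t₀ + c i * h)
        = f (t₀ + c i * h)
            ((fun x => α₀ + a₀ * x + ∑ k, a k * u k x) (t₀ + c i * h))) := by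
  set E : Matrix (Fin s) (Fin s) ℝ := Matrix.of fun i k : Fin s =>
    u k (t₀ + c i * h) - u k t₀ - c i * h * deriv (u k) t₀
  set M : Matrix (Fin s) (Fin s) ℝ := Matrix.of fun j k : Fin s =>
    deriv (deriv (u k)) (t₀ + c j * h)
  set a : Fin s → ℝ := E⁻¹ *ᵥ fun i => Y i - y₀ - c i * h * y₀'
  have hEa : E *ᵥ a = fun i => Y i - y₀ - c i * h * y₀' := by
    rw [mulVec_mulVec, mul_nonsing_inv E hE, one_mulVec]
  have hEAM : E = h ^ 2 • (A * M) := by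
    ext i k
    simp only [E, M, of_apply, Matrix.smul_apply, mul_apply, smul_eq_mul, hAu i k, Finset.mul_sum]
    ring
  have hMa : M *ᵥ a = fun j => f (t₀ + c j * h) (Y j) :=
    mulVec_eq_of_mulVec_eq_smul_mul (pow_ne_zero 2 hh) hA hEAM <| by
      rw [hEa]; ext i; simp only [hY i, Pi.smul_apply, mulVec, dotProduct, smul_eq_mul]; ring
  obtain ⟨α₀, a₀, hinit, hinit', htaylor⟩ :=
    exists_spanFun_initial (fun k => (hu k).1) t₀ y₀ y₀' a
  have hnodes : ∀ i, spanFun α₀ a₀ a u (t₀ + c i * h) = Y i := by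
    intro i
    have hEai : ∑ k, E i k * a k = Y i - y₀ - c i * h * y₀' := congrFun hEa i
    simp only [E, of_apply] at hEai
    simp only [htaylor, add_sub_cancel_left, mul_comm (a _), hEai]
    ring
  refine ⟨α₀, a₀, a, hinit, hinit', hnodes, fun i => ?_⟩
  change deriv (deriv (spanFun α₀ a₀ a u)) _ = f _ (spanFun α₀ a₀ a u _)
  rw [deriv_deriv_spanFun hu, hnodes i, ← congrFun hMa i]
  simp [M, mulVec, dotProduct, mul_comm]

theorem stmt_3 (s : ℕ) (c : Fin s → ℝ) (hc : Function.Injective c)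
    (u : Fin s → ℝ → ℝ)
    (hu : ∀ k, Differentiable ℝ (u k) ∧ Differentiable ℝ (deriv (u k)))
    (t₀ h : ℝ) (hh : h ≠ 0)
    (hE : IsUnit (Matrix.of fun i k : Fin s =>
      u k (t₀ + c i * h) - u k t₀ - c i * h * deriv (u k) t₀).det)
    (A : Matrix (Fin s) (Fin s) ℝ) (hA : IsUnit A.det)
    (hAu : ∀ i k, u k (t₀ + c i * h) = u k t₀ + c i * h * deriv (u k) t₀ +
      h ^ 2 * ∑ j, A i j * deriv (deriv (u k)) (t₀ + c j * h))
    (f : ℝ → ℝ → ℝ) (y₀ y₀' : ℝ) (Y : Fin s → ℝ)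
    (hY : ∀ i, Y i = y₀ + h * c i * y₀' +
      h ^ 2 * ∑ j, A i j * f (t₀ + c j * h) (Y j)) :
    ∃ (α₀ a₀ : ℝ) (a : Fin s → ℝ),
      (fun x => α₀ + a₀ * x + ∑ k, a k * u k x) t₀ = y₀ ∧
      deriv (fun x => α₀ + a₀ * x + ∑ k, a k * u k x) t₀ = y₀' ∧
      (∀ i, (fun x => α₀ + a₀ * x + ∑ k, a k * u k x) (t₀ + c i * h) = Y i) ∧
      (∀ i, deriv (deriv (fun x => α₀ + a₀ * x + ∑ k, a k * u k x)) (t₀ + c i * h)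
        = f (t₀ + c i * h)
            ((fun x => α₀ + a₀ * x + ∑ k, a k * u k x) (t₀ + c i * h))) :=
  stmt_3_general s c u hu t₀ h hh hE A hA hAu f y₀ y₀' Y hY
end

section
/- Let u₁,…,u_s : ℝ → ℝ be continuously differentiable, with the s+2 functions 1, t, u₁,…,u_s linearly independent over ℝ. Then the vector function u(t) = (1, t, u₁(t), …, u_s(t))ᵀ is separable (i.e., there exists a matrix function 𝓕 : ℝ → ℝ^{(s+2)×(s+2)} with u(t+h) = 𝓕(h)·u(t) = 𝓕(t)·u(h) for all t,h) if and only if each derivative u_k' (k = 1,…,s) lies in the linear span of {1, t, u₁, …, u_s}. -/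
/-!
If every translate of `u` is a fixed linear image of `u`, then every translate of `u_k` lies in the
finite-dimensional, hence closed, space `V = span {1, t, u₁, …, u_s}`, and so does `u_k'`, the
limit of difference quotients. Conversely, if `V` is closed under differentiation, the vector `u`
solves a linear ODE `u' = A u`, so `u (t + h) = exp (h A) u t`.
-/

open Matrix NormedSpace Topology Filter Submodule Set

theorem deriv_mem_of_forall_comp_add_mem {𝕜 F : Type*} [NontriviallyNormedField 𝕜]
    [NormedAddCommGroup F] [NormedSpace 𝕜 F] {V : Submodule 𝕜 (𝕜 → F)}
    (hV : IsClosed (V : Set (𝕜 → F))) {f : 𝕜 → F} (hf : Differentiable 𝕜 f)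
    (hmem : ∀ a, (fun x => f (x + a)) ∈ V) : deriv f ∈ V := by
  have hslope : Tendsto (fun a : 𝕜 => a⁻¹ • ((fun x => f (x + a)) - f)) (𝓝[≠] 0)
      (𝓝 (deriv f)) :=
    tendsto_pi_nhds.2 fun x => hasDerivAt_iff_tendsto_slope_zero.1 (hf x).hasDerivAt
  exact hV.mem_of_tendsto hslope <| .of_forall fun a =>
    V.smul_mem _ (V.sub_mem (hmem a) (by simpa using hmem 0))

theorem apply_add_eq_exp_smul_apply {E : Type*} [NormedAddCommGroup E] [NormedSpace ℝ E]
    [CompleteSpace E] {M : E →L[ℝ] E} {w : ℝ → E} (hw : ∀ t, HasDerivAt w (M (w t)) t)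
    (t h : ℝ) : w (t + h) = exp (h • M) (w t) := by
  -- `y ↦ exp ((h - y) • M) (w (t + y))` interpolates between the two sides and is constant.
  set g : ℝ → E := fun y => exp ((h - y) • M) (w (t + y))
  have hg : ∀ y, HasDerivAt g 0 y := by
    intro y
    have hexp : HasDerivAt (fun y : ℝ => exp ((h - y) • M))
        ((-1 : ℝ) • (exp ((h - y) • M) * M)) y :=
      (hasDerivAt_exp_smul_const M (h - y)).scomp y ((hasDerivAt_id y).const_sub h)
    have hshift : HasDerivAt (fun y => w (t + y)) (M (w (t + y))) y :=
      (hw (t + y)).comp_const_add t y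
    simpa using hexp.clm_apply hshift
  simpa [g] using
    is_const_of_deriv_eq_zero (fun y => (hg y).differentiableAt) (fun y => (hg y).deriv) h 0

section Family

variable {ι : Type*} [Fintype ι] (v : ι → ℝ → ℝ)

theorem comp_add_mem_span_range {F : Matrix ι ι ℝ} {a : ℝ}
    (hF : ∀ t, (fun i => v i (t + a)) = F *ᵥ fun i => v i t) (i : ι) :
    (fun t => v i (t + a)) ∈ span ℝ (range v) := by
  refine (mem_span_range_iff_exists_fun ℝ).2 ⟨F i, funext fun t => ?_⟩
  simp [Finset.sum_apply, congrFun (hF t) i, mulVec, dotProduct]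

theorem exists_hasDerivAt_mulVec_of_deriv_mem_span (hv : ∀ i, Differentiable ℝ (v i))
    (hd : ∀ i, deriv (v i) ∈ span ℝ (range v)) :
    ∃ A : Matrix ι ι ℝ, ∀ t, HasDerivAt (fun t i => v i t) (A *ᵥ fun i => v i t) t := by
  choose A hA using fun i => (mem_span_range_iff_exists_fun ℝ).1 (hd i)
  refine ⟨of A, fun t => hasDerivAt_pi.2 fun i => ?_⟩
  convert (hv i t).hasDerivAt using 1
  simp [← hA i, Finset.sum_apply, mulVec, dotProduct]

theorem exists_mulVec_eq_iff_deriv_mem_span [DecidableEq ι] (hv : ∀ i, Differentiable ℝ (v i)) :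
    (∃ F : ℝ → Matrix ι ι ℝ, ∀ t h, (fun i => v i (t + h)) = F h *ᵥ fun i => v i t) ↔
      ∀ i, deriv (v i) ∈ span ℝ (range v) := by
  constructor
  · rintro ⟨F, hF⟩ i
    have := FiniteDimensional.span_of_finite ℝ (finite_range v)
    exact deriv_mem_of_forall_comp_add_mem (span ℝ (range v)).closed_of_finiteDimensional (hv i)
      fun a => comp_add_mem_span_range v (fun t => hF t a) i
  · intro hd
    obtain ⟨A, hA⟩ := exists_hasDerivAt_mulVec_of_deriv_mem_span v hv hd
    let M : (ι → ℝ) →L[ℝ] (ι → ℝ) := LinearMap.toContinuousLinearMap (mulVecLin A)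
    refine ⟨fun h => LinearMap.toMatrix' (exp (h • M) : (ι → ℝ) →L[ℝ] (ι → ℝ)), fun t h => ?_⟩
    rw [LinearMap.toMatrix'_mulVec]
    exact apply_add_eq_exp_smul_apply (M := M) hA t h

end Family

theorem stmt_6_general (s : ℕ) (u : Fin s → ℝ → ℝ) (hu : ∀ k, ContDiff ℝ 1 (u k)) :
    (∃ 𝓕 : ℝ → Matrix (Fin (s + 2)) (Fin (s + 2)) ℝ, ∀ t h : ℝ,
      (Fin.cons 1 (Fin.cons (t + h) fun k => u k (t + h)) : Fin (s + 2) → ℝ)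
        = 𝓕 h *ᵥ (Fin.cons 1 (Fin.cons t fun k => u k t)) ∧
      (Fin.cons 1 (Fin.cons (t + h) fun k => u k (t + h)) : Fin (s + 2) → ℝ)
        = 𝓕 t *ᵥ (Fin.cons 1 (Fin.cons h fun k => u k h))) ↔
    (∀ k, deriv (u k) ∈ Submodule.span ℝ
      (Set.range
        (Fin.cons (fun _ : ℝ => (1 : ℝ)) (Fin.cons (fun x : ℝ => x) u) :
          Fin (s + 2) → ℝ → ℝ))) := by
  set v : Fin (s + 2) → ℝ → ℝ := Fin.cons (fun _ => 1) (Fin.cons (fun x => x) u)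
  have hv : ∀ i, Differentiable ℝ (v i) :=
    Fin.cases (differentiable_const 1)
      (Fin.cases differentiable_id fun k => (hu k).differentiable one_ne_zero)
  have heval : ∀ t, (Fin.cons 1 (Fin.cons t fun k => u k t) : Fin (s + 2) → ℝ) = fun i => v i t :=
    fun t => funext <| Fin.cases rfl (Fin.cases rfl fun _ => rfl)
  have hsymm : ∀ F : ℝ → Matrix (Fin (s + 2)) (Fin (s + 2)) ℝ,
      (∀ t h, (fun i => v i (t + h)) = F h *ᵥ (fun i => v i t) ∧
        (fun i => v i (t + h)) = F t *ᵥ (fun i => v i h)) ↔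
      ∀ t h, (fun i => v i (t + h)) = F h *ᵥ (fun i => v i t) :=
    fun F => ⟨fun hF t h => (hF t h).1, fun hF t h => ⟨hF t h, add_comm t h ▸ hF h t⟩⟩
  have hderiv_one : deriv (v 0) ∈ span ℝ (range v) := by
    rw [show deriv (v 0) = 0 from deriv_const' 1]
    exact zero_mem _
  have hderiv_id : deriv (v 1) ∈ span ℝ (range v) :=
    Submodule.subset_span ⟨0, by simp [v]⟩
  simp only [heval, hsymm]
  rw [exists_mulVec_eq_iff_deriv_mem_span v hv, Fin.forall_fin_succ, Fin.forall_fin_succ]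
  exact ⟨fun hd => hd.2.2, fun hd => ⟨hderiv_one, hderiv_id, hd⟩⟩

theorem stmt_6 (s : ℕ) (u : Fin s → ℝ → ℝ) (hu : ∀ k, ContDiff ℝ 1 (u k))
    (hind : LinearIndependent ℝ
      (Fin.cons (fun _ : ℝ => (1 : ℝ)) (Fin.cons (fun x : ℝ => x) u) :
        Fin (s + 2) → ℝ → ℝ)) :
    (∃ 𝓕 : ℝ → Matrix (Fin (s + 2)) (Fin (s + 2)) ℝ, ∀ t h : ℝ,
      (Fin.cons 1 (Fin.cons (t + h) fun k => u k (t + h)) : Fin (s + 2) → ℝ)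
        = 𝓕 h *ᵥ (Fin.cons 1 (Fin.cons t fun k => u k t)) ∧
      (Fin.cons 1 (Fin.cons (t + h) fun k => u k (t + h)) : Fin (s + 2) → ℝ)
        = 𝓕 t *ᵥ (Fin.cons 1 (Fin.cons h fun k => u k h))) ↔
    (∀ k, deriv (u k) ∈ Submodule.span ℝ
      (Set.range
        (Fin.cons (fun _ : ℝ => (1 : ℝ)) (Fin.cons (fun x : ℝ => x) u) :
          Fin (s + 2) → ℝ → ℝ))) :=
  stmt_6_general s u hu
end

section
/- Let c₁,…,c_s be distinct real numbers, let u₁,…,u_s : ℝ → ℝ be infinitely differentiable functions with 1, t, u₁, …, u_s linearly independent over ℝ, and let h₀ > 0. Suppose there exist functions A : (0,h₀) → ℝ^{s×s}, b, d : (0,h₀) → ℝ^s such that for almost every h ∈ (0,h₀) and every t ∈ ℝ the FRKN fitting equations hold for all k = 1,…,s: u_k(t+h) = u_k(t) + h·u_k'(t) + h²·Σ_j b_j(h)·u_k''(t+c_j h); u_k'(t+h) = u_k'(t) + h·Σ_j d_j(h)·u_k''(t+c_j h); u_k(t+c_i h) = u_k(t) + c_i h·u_k'(t) + h²·Σ_j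 a_{ij}(h)·u_k''(t+c_j h). Then each u_k' lies in the linear span of {1, t, u₁, …, u_s} (equivalently, (1, t, u₁, …, u_s)ᵀ is separable). -/
open Matrix BigOperators MeasureTheory

namespace FRKNAux

open Filter Topology Finset

noncomputable section

/-- Taylor remainder of order `n` of `f` at `t`. -/
def rem (f : ℝ → ℝ) (t : ℝ) (n : ℕ) (δ : ℝ) : ℝ :=
  f (t + δ) - ∑ m ∈ Finset.range n, δ ^ m / m.factorial * iteratedDeriv m f t

lemma smooth_iter {f : ℝ → ℝ} (hf : ContDiff ℝ ((⊤ : ℕ∞) : WithTop ℕ∞) f) (n : ℕ) :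
    ContDiff ℝ ((⊤ : ℕ∞) : WithTop ℕ∞) (iteratedDeriv n f) := by
  rw [iteratedDeriv_eq_iterate]; exact hf.iterate_deriv n

lemma smooth_diff {f : ℝ → ℝ} (hf : ContDiff ℝ ((⊤ : ℕ∞) : WithTop ℕ∞) f) :
    Differentiable ℝ f :=
  hf.differentiable (by simp)

lemma smooth_deriv {f : ℝ → ℝ} (hf : ContDiff ℝ ((⊤ : ℕ∞) : WithTop ℕ∞) f) :
    ContDiff ℝ ((⊤ : ℕ∞) : WithTop ℕ∞) (deriv f) :=
  (contDiff_infty_iff_deriv.mp hf).2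

lemma rem_zero {f : ℝ → ℝ} {t : ℝ} {n : ℕ} (hn : 0 < n) : rem f t n 0 = 0 := by
  rcases Nat.exists_eq_add_of_lt hn with ⟨m, rfl⟩
  simp only [rem, add_zero]
  rw [Finset.sum_eq_single 0]
  · simp [iteratedDeriv_zero]
  · intro b _ hb
    simp [zero_pow hb]
  · intro h; simp at h

lemma rem_hasDerivAt {f : ℝ → ℝ} (hf : ContDiff ℝ ((⊤ : ℕ∞) : WithTop ℕ∞) f)
    (t : ℝ) (n : ℕ) (δ : ℝ) :
    HasDerivAt (rem f t (n + 1)) (rem (deriv f) t n δ) δ := by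
  have h1 : HasDerivAt (fun δ : ℝ => t + δ) 1 δ := (hasDerivAt_id δ).const_add t
  have h2 : HasDerivAt f (deriv f (t + δ)) (t + δ) :=
    ((smooth_diff hf) (t + δ)).hasDerivAt
  have hcomp : HasDerivAt (fun δ : ℝ => f (t + δ)) (deriv f (t + δ)) δ := by
    have := h2.comp δ h1; rw [mul_one] at this; exact this
  have hpoly : HasDerivAt
      (fun δ : ℝ => ∑ m ∈ Finset.range (n + 1), δ ^ m / m.factorial * iteratedDeriv m f t)
      (∑ m ∈ Finset.range n, δ ^ m / m.factorial * iteratedDeriv m (deriv f) t) δ := by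
    have : HasDerivAt
        (fun δ : ℝ => ∑ m ∈ Finset.range (n + 1), δ ^ m / m.factorial * iteratedDeriv m f t)
        (∑ m ∈ Finset.range (n + 1),
          (iteratedDeriv m f t / m.factorial) * ((m : ℝ) * δ ^ (m - 1))) δ := by
      apply HasDerivAt.fun_sum
      intro m _
      have := (hasDerivAt_pow m δ).const_mul (iteratedDeriv m f t / m.factorial)
      convert this using 2
      · rfl
      · ring
    convert this using 1
    rw [Finset.sum_range_succ']
    simp only [Nat.cast_zero, zero_mul, mul_zero, add_zero]
    apply Finset.sum_congr rfl
    intro m _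
    rw [← iteratedDeriv_succ']
    have : ((m + 1).factorial : ℝ) = (m + 1) * m.factorial := by
      push_cast [Nat.factorial_succ]; ring
    rw [this]
    simp only [Nat.add_sub_cancel, Nat.cast_add, Nat.cast_one]
    have hm : (m.factorial : ℝ) ≠ 0 := Nat.cast_ne_zero.mpr (Nat.factorial_ne_zero m)
    field_simp
  exact hcomp.sub hpoly

lemma peano {f : ℝ → ℝ} (hf : ContDiff ℝ ((⊤ : ℕ∞) : WithTop ℕ∞) f) (n : ℕ) (t : ℝ) :
    Tendsto (fun δ => rem f t n δ / δ ^ n) (𝓝[≠] (0 : ℝ))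
      (𝓝 (iteratedDeriv n f t / n.factorial)) := by
  induction n generalizing f with
  | zero =>
      have : (fun δ => rem f t 0 δ / δ ^ 0) = fun δ => f (t + δ) := by
        funext δ; simp [rem]
      rw [this]
      have hc : Continuous fun δ : ℝ => f (t + δ) :=
        hf.continuous.comp (continuous_const.add continuous_id)
      have := (hc.tendsto 0).mono_left (nhdsWithin_le_nhds (s := {(0:ℝ)}ᶜ))
      simpa [iteratedDeriv_zero] using this
  | succ n ih =>
      have key := HasDerivAt.lhopital_zero_nhdsNE
        (f := rem f t (n + 1)) (f' := rem (deriv f) t n)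
        (g := fun δ : ℝ => δ ^ (n + 1)) (g' := fun δ : ℝ => (n + 1 : ℝ) * δ ^ n)
        (a := 0) (l := 𝓝 (iteratedDeriv (n + 1) f t / (n + 1).factorial))
        ?_ ?_ ?_ ?_ ?_ ?_
      · exact key
      · exact Eventually.of_forall fun δ => rem_hasDerivAt hf t n δ
      · exact Eventually.of_forall fun δ => by simpa using hasDerivAt_pow (n + 1) δ
      · filter_upwards [self_mem_nhdsWithin] with δ (hδ : δ ≠ 0)
        positivity
      · have hc : Continuous (rem f t (n + 1)) := by
          unfold rem
          exact (hf.continuous.comp (continuous_const.add continuous_id)).sub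
            (continuous_finset_sum _ fun m _ =>
              ((continuous_pow m).div_const _).mul continuous_const)
        have := (hc.tendsto 0).mono_left (nhdsWithin_le_nhds (s := {(0:ℝ)}ᶜ))
        rwa [rem_zero (Nat.succ_pos n)] at this
      · have : Tendsto (fun δ : ℝ => δ ^ (n + 1)) (𝓝 0) (𝓝 0) := by
          simpa using (continuous_pow (n + 1)).tendsto (0 : ℝ)
        exact this.mono_left (nhdsWithin_le_nhds (s := {(0:ℝ)}ᶜ))
      · have h2 := (ih (smooth_deriv hf)).div_const ((n : ℝ) + 1)
        have heq : ∀ δ : ℝ, rem (deriv f) t n δ / δ ^ n / ((n : ℝ) + 1)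
            = rem (deriv f) t n δ / ((n + 1 : ℝ) * δ ^ n) := by
          intro δ; rw [div_div]; ring_nf
        have hval : iteratedDeriv n (deriv f) t / n.factorial / ((n : ℝ) + 1)
            = iteratedDeriv (n + 1) f t / (n + 1).factorial := by
          rw [← iteratedDeriv_succ']
          have : (((n + 1).factorial : ℕ) : ℝ) = (n + 1) * n.factorial := by
            push_cast [Nat.factorial_succ]; ring
          rw [this, div_div]
          ring_nf
        rw [hval] at h2
        refine h2.congr fun δ => ?_
        push_cast
        exact heq δ

lemma speano {f : ℝ → ℝ} (hf : ContDiff ℝ ((⊤ : ℕ∞) : WithTop ℕ∞) f) (n : ℕ) (t a : ℝ) :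
    Tendsto (fun h => rem f t n (a * h) / h ^ n) (𝓝[>] (0 : ℝ))
      (𝓝 (a ^ n * iteratedDeriv n f t / n.factorial)) := by
  rcases eq_or_ne a 0 with rfl | ha
  · rcases Nat.eq_zero_or_pos n with rfl | hn
    · have : (fun h : ℝ => rem f t 0 (0 * h) / h ^ 0) = fun _ => f t := by
        funext h; simp [rem]
      rw [this]
      simpa [iteratedDeriv_zero] using (tendsto_const_nhds :
        Tendsto (fun _ : ℝ => f t) (𝓝[>] (0:ℝ)) (𝓝 (f t)))
    · have : (fun h : ℝ => rem f t n (0 * h) / h ^ n) = fun _ => 0 := by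
        funext h; rw [zero_mul, rem_zero hn, zero_div]
      rw [this, zero_pow hn.ne', zero_mul, zero_div]
      exact tendsto_const_nhds
  · have hmap : Tendsto (fun h : ℝ => a * h) (𝓝[>] (0:ℝ)) (𝓝[≠] (0:ℝ)) := by
      apply tendsto_nhdsWithin_of_tendsto_nhds_of_eventually_within
      · have : Tendsto (fun h : ℝ => a * h) (𝓝 0) (𝓝 (a * 0)) :=
          (continuous_const.mul continuous_id).tendsto 0
        rw [mul_zero] at this
        exact this.mono_left nhdsWithin_le_nhds
      · filter_upwards [self_mem_nhdsWithin] with h (hh : 0 < h)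
        exact mul_ne_zero ha hh.ne'
    have hbase := ((peano hf n t).comp hmap).const_mul (a ^ n)
    have heq : ∀ᶠ h in 𝓝[>] (0:ℝ),
        a ^ n * ((fun δ => rem f t n δ / δ ^ n) ((fun h : ℝ => a * h) h))
          = rem f t n (a * h) / h ^ n := by
      filter_upwards [self_mem_nhdsWithin] with h (hh : 0 < h)
      show a ^ n * (rem f t n (a * h) / (a * h) ^ n) = rem f t n (a * h) / h ^ n
      rw [mul_pow, ← mul_div_assoc, mul_div_mul_left _ _ (pow_ne_zero n ha)]
    have := hbase.congr' heq
    rw [mul_div_assoc]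
    exact this

section Chunk2

open Polynomial

variable {s : ℕ}

lemma sum_count_le (T : Finset ℝ) (M : Multiset ℝ) :
    ∑ a ∈ T, M.count a ≤ Multiset.card M := by
  classical
  calc ∑ a ∈ T, M.count a = ∑ a ∈ T ∩ M.toFinset, M.count a := by
        refine (Finset.sum_subset Finset.inter_subset_left ?_).symm
        intro x hxT hx
        rw [Multiset.count_eq_zero]
        intro hxM
        exact hx (Finset.mem_inter.mpr ⟨hxT, Multiset.mem_toFinset.mpr hxM⟩)
    _ ≤ ∑ a ∈ M.toFinset, M.count a :=
        Finset.sum_le_sum_of_subset_of_nonneg Finset.inter_subset_right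
          (fun _ _ _ => Nat.zero_le _)
    _ = Multiset.card M := Multiset.toFinset_sum_count_eq M

lemma vandermonde_solve {c : Fin s → ℝ} (hc : Function.Injective c) (τ : Fin s → ℝ) :
    ∃ w : Fin s → ℝ, ∀ m : Fin s, ∑ j, w j * c j ^ (m : ℕ) = τ m := by
  classical
  set M : Matrix (Fin s) (Fin s) ℝ := (Matrix.vandermonde c)ᵀ with hM
  have hdet : M.det ≠ 0 := by
    rw [hM, Matrix.det_transpose]
    exact Matrix.det_vandermonde_ne_zero_iff.mpr hc
  refine ⟨M⁻¹.mulVec τ, fun m => ?_⟩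
  have h1 : M * M⁻¹ = 1 := Matrix.mul_nonsing_inv M (isUnit_iff_ne_zero.mpr hdet)
  have h2 : M.mulVec (M⁻¹.mulVec τ) = τ := by
    rw [Matrix.mulVec_mulVec, h1, Matrix.one_mulVec]
  have h3 := congrFun h2 m
  rw [Matrix.mulVec, dotProduct] at h3
  simpa [hM, Matrix.vandermonde, mul_comm] using h3

/-- `ω(X) = ∏ (X - c j)`. -/
def omP (c : Fin s → ℝ) : Polynomial ℝ := ∏ j, (X - C (c j))

lemma omP_monic (c : Fin s → ℝ) : (omP c).Monic :=
  monic_prod_of_monic _ _ fun j _ => monic_X_sub_C (c j)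

lemma omP_natDegree (c : Fin s → ℝ) : (omP c).natDegree = s := by
  rw [omP, natDegree_prod_of_monic _ _ fun j _ => monic_X_sub_C (c j)]
  simp

lemma omP_coeff_top (c : Fin s → ℝ) : (omP c).coeff s = 1 := by
  have := (omP_monic c).coeff_natDegree
  rwa [omP_natDegree] at this

lemma omP_eval (c : Fin s → ℝ) (x : ℝ) : (omP c).eval x = ∏ j, (x - c j) := by
  simp [omP, Polynomial.eval_prod]

/-- Second antiderivative of `ω` vanishing to second order at `0`. -/
def FP (c : Fin s → ℝ) : Polynomial ℝ :=
  ∑ m ∈ Finset.range (s + 1), C ((omP c).coeff m / ((m + 1) * (m + 2))) * X ^ (m + 2)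

lemma FP_deriv (c : Fin s → ℝ) : derivative (FP c) =
    ∑ m ∈ Finset.range (s + 1), C ((omP c).coeff m / (m + 1)) * X ^ (m + 1) := by
  rw [FP, map_sum]
  refine Finset.sum_congr rfl fun m _ => ?_
  rw [derivative_C_mul_X_pow]
  have h1 : ((m : ℝ) + 1) ≠ 0 := by positivity
  have h2 : ((m : ℝ) + 2) ≠ 0 := by positivity
  have h3 : (omP c).coeff m / (((m:ℝ) + 1) * ((m:ℝ) + 2)) * ((m:ℝ) + 2)
      = (omP c).coeff m / ((m:ℝ) + 1) := by
    push_cast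
    field_simp
  rw [show m + 2 - 1 = m + 1 from rfl]
  push_cast
  rw [h3]

lemma FP_deriv2 (c : Fin s → ℝ) : derivative (derivative (FP c)) = omP c := by
  have homega : omP c = ∑ m ∈ Finset.range (s + 1), C ((omP c).coeff m) * X ^ m := by
    conv_lhs => rw [(omP c).as_sum_range_C_mul_X_pow]
    rw [omP_natDegree]
  rw [FP_deriv, map_sum]
  conv_rhs => rw [homega]
  refine Finset.sum_congr rfl fun m _ => ?_
  rw [derivative_C_mul_X_pow]
  have h1 : ((m : ℝ) + 1) ≠ 0 := by positivity
  have h3 : (omP c).coeff m / ((m:ℝ) + 1) * ((m:ℝ) + 1) = (omP c).coeff m := by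
    push_cast
    field_simp
  rw [show m + 1 - 1 = m from rfl]
  push_cast
  rw [h3]

lemma FP_ne_zero (c : Fin s → ℝ) : FP c ≠ 0 := by
  intro h
  have h2 : derivative (derivative (FP c)) = 0 := by rw [h]; simp
  rw [FP_deriv2] at h2
  exact (omP_monic c).ne_zero h2

lemma FP_deriv_ne_zero (c : Fin s → ℝ) : derivative (FP c) ≠ 0 := by
  intro h
  have h2 : derivative (derivative (FP c)) = 0 := by rw [h]; simp
  rw [FP_deriv2] at h2
  exact (omP_monic c).ne_zero h2

lemma FP_natDegree_le (c : Fin s → ℝ) : (FP c).natDegree ≤ s + 2 := by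
  refine Polynomial.natDegree_sum_le_of_forall_le _ _ fun m hm => ?_
  refine le_trans (Polynomial.natDegree_C_mul_le _ _) ?_
  rw [Polynomial.natDegree_X_pow]
  have := Finset.mem_range.mp hm
  omega

lemma X_pow_two_dvd_FP (c : Fin s → ℝ) : X ^ 2 ∣ FP c := by
  refine Finset.dvd_sum fun m _ => ?_
  exact Dvd.dvd.mul_left (pow_dvd_pow X (by omega)) _

lemma X_pow_three_dvd_FP {c : Fin s → ℝ} (h0 : ∃ j, c j = 0) : X ^ 3 ∣ FP c := by
  refine Finset.dvd_sum fun m _ => ?_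
  rcases Nat.eq_zero_or_pos m with rfl | hm
  · have : (omP c).coeff 0 = 0 := by
      rw [Polynomial.coeff_zero_eq_eval_zero, omP_eval]
      obtain ⟨j, hj⟩ := h0
      exact Finset.prod_eq_zero (Finset.mem_univ j) (by rw [hj, zero_sub, neg_zero])
    rw [this]
    simp
  · exact Dvd.dvd.mul_left (pow_dvd_pow X (by omega)) _

lemma exists_kappa {c : Fin s → ℝ} (hc : Function.Injective c) :
    ¬ ((FP c).eval 1 = 0 ∧ (derivative (FP c)).eval 1 = 0 ∧
        ∀ i, (FP c).eval (c i) = 0) := by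
  classical
  rintro ⟨h1, h1', h3⟩
  set F := FP c with hFdef
  have hF : F ≠ 0 := FP_ne_zero c
  have hF' : derivative F ≠ 0 := FP_deriv_ne_zero c
  set I : Finset ℝ := Finset.univ.image c with hI
  have hcardI : I.card = s := by
    rw [hI, Finset.card_image_of_injective _ hc, Finset.card_univ, Fintype.card_fin]
  set D : Finset ℝ := I \ {0, 1} with hD
  -- multiplicity at 0
  have hm0 : 2 + (if (0:ℝ) ∈ I then 1 else 0) ≤ rootMultiplicity 0 F := by
    rw [Polynomial.le_rootMultiplicity_iff hF]
    split_ifs with h0I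
    · obtain ⟨j, _, hj⟩ := Finset.mem_image.mp (hI ▸ h0I)
      have := X_pow_three_dvd_FP (c := c) ⟨j, hj⟩
      simpa using this
    · simpa using X_pow_two_dvd_FP c
  -- multiplicity at 1
  have hroot1 : IsRoot F 1 := h1
  have hstep : rootMultiplicity 1 (derivative F) = rootMultiplicity 1 F - 1 :=
    Polynomial.derivative_rootMultiplicity_of_root hroot1
  have hpos1 : 0 < rootMultiplicity 1 F := (Polynomial.rootMultiplicity_pos hF).mpr hroot1
  have hm1 : 2 + (if (1:ℝ) ∈ I then 1 else 0) ≤ rootMultiplicity 1 F := by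
    have hpos1' : 0 < rootMultiplicity 1 (derivative F) :=
      (Polynomial.rootMultiplicity_pos hF').mpr h1'
    split_ifs with h1I
    · -- need rootMultiplicity 1 (derivative F) ≥ 2
      have hroot2 : IsRoot (derivative (derivative F)) 1 := by
        rw [hFdef, FP_deriv2]
        obtain ⟨j, _, hj⟩ := Finset.mem_image.mp (hI ▸ h1I)
        rw [IsRoot, omP_eval]
        exact Finset.prod_eq_zero (Finset.mem_univ j) (by rw [hj, sub_self])
      have hstep2 : rootMultiplicity 1 (derivative (derivative F))
          = rootMultiplicity 1 (derivative F) - 1 :=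
        Polynomial.derivative_rootMultiplicity_of_root h1'
      have hF'' : derivative (derivative F) ≠ 0 := by
        rw [hFdef, FP_deriv2]; exact (omP_monic c).ne_zero
      have hpos2 : 0 < rootMultiplicity 1 (derivative (derivative F)) :=
        (Polynomial.rootMultiplicity_pos hF'').mpr hroot2
      omega
    · omega
  -- multiplicity at other nodes
  have hmD : ∀ a ∈ D, 1 ≤ rootMultiplicity a F := by
    intro a ha
    obtain ⟨i, _, hi⟩ := Finset.mem_image.mp (Finset.mem_sdiff.mp ha).1
    exact (Polynomial.rootMultiplicity_pos hF).mpr (hi ▸ h3 i)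
  -- assemble
  have h0T : (0:ℝ) ∉ insert (1:ℝ) D := by
    simp only [Finset.mem_insert]
    push_neg
    constructor
    · norm_num
    · rw [hD]
      intro h
      exact absurd (Finset.mem_sdiff.mp h).2 (by simp)
  have h1T : (1:ℝ) ∉ D := by
    rw [hD]
    intro h
    exact absurd (Finset.mem_sdiff.mp h).2 (by simp)
  set T : Finset ℝ := insert 0 (insert 1 D) with hT
  have hsplit : ∑ a ∈ T, (F.roots).count a
      = (F.roots).count 0 + ((F.roots).count 1 + ∑ a ∈ D, (F.roots).count a) := by
    rw [hT, Finset.sum_insert h0T, Finset.sum_insert h1T]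
  have hcount : ∀ a : ℝ, (F.roots).count a = rootMultiplicity a F :=
    fun a => Polynomial.count_roots F
  have hDsum : D.card ≤ ∑ a ∈ D, (F.roots).count a := by
    calc D.card = ∑ _a ∈ D, 1 := by simp
    _ ≤ ∑ a ∈ D, (F.roots).count a :=
        Finset.sum_le_sum fun a ha => by rw [hcount]; exact hmD a ha
  -- card D bound
  have hinter : (I ∩ ({0, 1} : Finset ℝ)).card
      ≤ (if (0:ℝ) ∈ I then 1 else 0) + (if (1:ℝ) ∈ I then 1 else 0) := by
    have hsub : I ∩ ({0, 1} : Finset ℝ) ⊆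
        (if (0:ℝ) ∈ I then ({0} : Finset ℝ) else ∅) ∪
        (if (1:ℝ) ∈ I then ({1} : Finset ℝ) else ∅) := by
      intro x hx
      rcases Finset.mem_inter.mp hx with ⟨hxI, hx01⟩
      rcases Finset.mem_insert.mp hx01 with rfl | hx1
      · simp only [Finset.mem_union]
        left
        rw [if_pos hxI]
        exact Finset.mem_singleton_self _
      · rw [Finset.mem_singleton] at hx1
        subst hx1
        simp only [Finset.mem_union]
        right
        rw [if_pos hxI]
        exact Finset.mem_singleton_self _
    refine le_trans (Finset.card_le_card hsub) ?_
    refine le_trans (Finset.card_union_le _ _) ?_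
    gcongr <;> split_ifs <;> simp
  have hcardD : s ≤ D.card + ((if (0:ℝ) ∈ I then 1 else 0) + (if (1:ℝ) ∈ I then 1 else 0)) := by
    have := Finset.card_sdiff_add_card_inter I ({0, 1} : Finset ℝ)
    rw [← hD] at this
    omega
  have hle : ∑ a ∈ T, (F.roots).count a ≤ s + 2 := by
    refine le_trans (sum_count_le T F.roots) ?_
    refine le_trans (Polynomial.card_roots' F) (FP_natDegree_le c)
  rw [hsplit, hcount, hcount] at hle
  omega

end Chunk2

section Chunk3

open Filter Topology

/-- Uniqueness for the linear ODE `y⁽ⁿ⁾ = ∑ aₘ y⁽ᵐ⁾` with zero initial data. -/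
lemma ode_zero (n : ℕ) (hn : 0 < n) (a : Fin n → ℝ) (y : ℝ → ℝ)
    (hy : ContDiff ℝ ((⊤ : ℕ∞) : WithTop ℕ∞) y)
    (heq : ∀ t, iteratedDeriv n y t = ∑ m : Fin n, a m * iteratedDeriv (m : ℕ) y t)
    (h0 : ∀ m : Fin n, iteratedDeriv (m : ℕ) y 0 = 0) :
    ∀ t, y t = 0 := by
  classical
  set L : (Fin n → ℝ) →ₗ[ℝ] (Fin n → ℝ) :=
    LinearMap.pi (fun i : Fin n =>
      if h : (i : ℕ) + 1 < n then LinearMap.proj (⟨(i : ℕ) + 1, h⟩ : Fin n)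
      else ∑ m : Fin n, a m • LinearMap.proj m) with hL
  set Lc := LinearMap.toContinuousLinearMap L with hLc
  have hLip : ∀ t : ℝ, LipschitzWith ‖Lc‖₊ (fun x => L x) := fun _ => Lc.lipschitz
  set f : ℝ → (Fin n → ℝ) := fun t i => iteratedDeriv (i : ℕ) y t with hf
  have hderiv : ∀ t : ℝ, HasDerivAt f (L (f t)) t := by
    intro t
    rw [hasDerivAt_pi]
    intro i
    have hcomp : HasDerivAt (fun t => iteratedDeriv (i : ℕ) y t)
        (iteratedDeriv ((i : ℕ) + 1) y t) t := by
      rw [iteratedDeriv_succ]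
      exact ((smooth_diff (smooth_iter hy (i : ℕ))) t).hasDerivAt
    have hval : L (f t) i = iteratedDeriv ((i : ℕ) + 1) y t := by
      rw [hL]
      simp only [LinearMap.pi_apply]
      split_ifs with h
      · simp [hf]
      · have hi : (i : ℕ) + 1 = n := by
          have := i.isLt
          omega
        rw [hi, heq t]
        simp [hf, LinearMap.sum_apply]
    rw [hval]
    exact hcomp
  have key : ∀ t : ℝ, f t = 0 := by
    intro t
    rcases eq_or_ne t 0 with rfl | ht
    · funext m; exact h0 m
    · have hmem : (0 : ℝ) ∈ Set.Ioo (-(|t| + 1)) (|t| + 1) := by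
        constructor <;> [nlinarith [abs_nonneg t]; nlinarith [abs_nonneg t]]
      have hmem' : t ∈ Set.Ioo (-(|t| + 1)) (|t| + 1) := by
        constructor
        · nlinarith [neg_abs_le t, abs_nonneg t]
        · nlinarith [le_abs_self t]
      have := ODE_solution_unique_of_mem_Ioo (v := fun _ x => L x) (K := ‖Lc‖₊)
        (s := fun _ => Set.univ) (f := f) (g := fun _ => 0)
        (t₀ := (0:ℝ)) (a := -(|t| + 1)) (b := |t| + 1) (fun _ _ => Lc.lipschitz.lipschitzOnWith)
        hmem
        (fun t' _ => ⟨hderiv t', trivial⟩)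
        (fun t' _ => ⟨by simpa using (hasDerivAt_const t' (0 : Fin n → ℝ)), trivial⟩)
        (by funext m; exact h0 m)
      exact this hmem'
  intro t
  have := congrFun (key t) ⟨0, hn⟩
  simpa [hf, iteratedDeriv_zero] using this

end Chunk3

section Chunk4

open Filter Topology

variable {s : ℕ}

lemma iter_iter (f : ℝ → ℝ) (m P : ℕ) :
    iteratedDeriv m (iteratedDeriv P f) = iteratedDeriv (m + P) f := by
  induction m with
  | zero => simp [iteratedDeriv_zero]
  | succ m ih =>
      rw [iteratedDeriv_succ, ih, ← iteratedDeriv_succ,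
        show m + P + 1 = m + 1 + P by omega]

lemma member_limit {f : ℝ → ℝ} (hf : ContDiff ℝ ((⊤ : ℕ∞) : WithTop ℕ∞) f)
    (P : ℕ) (β : ℝ) (c w : Fin s → ℝ)
    (hw : ∀ m : Fin s, ∑ j, w j * c j ^ (m : ℕ)
        = β ^ ((m : ℕ) + P) * ((m : ℕ).factorial : ℝ) / (((m : ℕ) + P).factorial : ℝ))
    (t : ℝ) :
    Tendsto (fun h : ℝ =>
      ((f (t + β * h) - ∑ m ∈ Finset.range P,
            (β * h) ^ m / (m.factorial : ℝ) * iteratedDeriv m f t) / h ^ P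
        - ∑ j, w j * iteratedDeriv P f (t + c j * h)) / h ^ s)
      (𝓝[>] (0 : ℝ))
      (𝓝 ((β ^ (P + s) * (s.factorial : ℝ) / ((P + s).factorial : ℝ) - ∑ j, w j * c j ^ s)
        * iteratedDeriv (P + s) f t / (s.factorial : ℝ))) := by
  classical
  set g := iteratedDeriv P f with hg
  have hgsmooth : ContDiff ℝ ((⊤ : ℕ∞) : WithTop ℕ∞) g := smooth_iter hf P
  have hgm : ∀ m : ℕ, iteratedDeriv m g t = iteratedDeriv (m + P) f t := fun m => by
    rw [hg, iter_iter]
  have key : ∀ h : ℝ, h ≠ 0 →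
      ((f (t + β * h) - ∑ m ∈ Finset.range P,
            (β * h) ^ m / (m.factorial : ℝ) * iteratedDeriv m f t) / h ^ P
        - ∑ j, w j * g (t + c j * h)) / h ^ s
      = rem f t (P + s) (β * h) / h ^ (P + s)
        - ∑ j, w j * (rem g t s (c j * h) / h ^ s) := by
    intro h hh
    have hhP : (h : ℝ) ^ P ≠ 0 := pow_ne_zero _ hh
    have hhs : (h : ℝ) ^ s ≠ 0 := pow_ne_zero _ hh
    -- A : split of the big Taylor sum
    have hA : f (t + β * h) - ∑ m ∈ Finset.range P,
          (β * h) ^ m / (m.factorial : ℝ) * iteratedDeriv m f t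
        = rem f t (P + s) (β * h)
          + ∑ m ∈ Finset.range s,
              (β * h) ^ (m + P) / ((m + P).factorial : ℝ) * iteratedDeriv (m + P) f t := by
      rw [rem]
      have hsplitsum : ∑ m ∈ Finset.range (P + s),
            (β * h) ^ m / (m.factorial : ℝ) * iteratedDeriv m f t
          = (∑ m ∈ Finset.range P, (β * h) ^ m / (m.factorial : ℝ) * iteratedDeriv m f t)
            + ∑ m ∈ Finset.range s,
                (β * h) ^ (m + P) / ((m + P).factorial : ℝ) * iteratedDeriv (m + P) f t := by
        rw [Finset.range_eq_Ico,
          ← Finset.sum_Ico_consecutive _ (Nat.zero_le P) (Nat.le_add_right P s),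
          ← Finset.range_eq_Ico]
        congr 1
        rw [Finset.sum_Ico_eq_sum_range, show P + s - P = s from by omega]
        exact Finset.sum_congr rfl fun m _ => by rw [Nat.add_comm P m]
      rw [hsplitsum]
      ring
    -- B : Taylor expansion of each node
    have hB : ∀ j : Fin s, g (t + c j * h)
        = rem g t s (c j * h)
          + ∑ m ∈ Finset.range s, (c j * h) ^ m / (m.factorial : ℝ) * iteratedDeriv m g t := by
      intro j
      rw [rem]
      ring
    -- C : weighted middle sum
    have hC : ∑ j, w j * (∑ m ∈ Finset.range s,
          (c j * h) ^ m / (m.factorial : ℝ) * iteratedDeriv m g t)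
        = ∑ m ∈ Finset.range s,
            (β ^ (m + P) * h ^ m / ((m + P).factorial : ℝ)) * iteratedDeriv (m + P) f t := by
      simp_rw [Finset.mul_sum]
      rw [Finset.sum_comm]
      refine Finset.sum_congr rfl fun m hm => ?_
      have hmfin : ∑ j, w j * c j ^ m
          = β ^ (m + P) * ((m.factorial : ℝ)) / (((m + P).factorial : ℝ)) := by
        simpa using hw ⟨m, Finset.mem_range.mp hm⟩
      have hfac : ((m.factorial : ℝ)) ≠ 0 := Nat.cast_ne_zero.mpr m.factorial_ne_zero
      have hfac2 : (((m + P).factorial : ℝ)) ≠ 0 := Nat.cast_ne_zero.mpr (m + P).factorial_ne_zero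
      calc ∑ j, w j * ((c j * h) ^ m / (m.factorial : ℝ) * iteratedDeriv m g t)
          = (∑ j, w j * c j ^ m) * (h ^ m / (m.factorial : ℝ) * iteratedDeriv m g t) := by
            rw [Finset.sum_mul]
            refine Finset.sum_congr rfl fun j _ => ?_
            rw [mul_pow]
            ring
        _ = (β ^ (m + P) * h ^ m / ((m + P).factorial : ℝ)) * iteratedDeriv (m + P) f t := by
            rw [hmfin, hgm m]
            field_simp
    -- D : the matching middle sum from A
    have hD : (∑ m ∈ Finset.range s, (β * h) ^ (m + P) / ((m + P).factorial : ℝ)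
          * iteratedDeriv (m + P) f t) / h ^ P
        = ∑ m ∈ Finset.range s, (β ^ (m + P) * h ^ m / ((m + P).factorial : ℝ))
            * iteratedDeriv (m + P) f t := by
      rw [Finset.sum_div]
      refine Finset.sum_congr rfl fun m _ => ?_
      rw [mul_pow, pow_add]
      field_simp
      ring
    rw [hA, add_div, hD]
    simp_rw [hB, mul_add]
    rw [Finset.sum_add_distrib, hC]
    have hfin : ∀ (X S D : ℝ), (X / h ^ P + D - (S + D)) / h ^ s
        = X / h ^ (P + s) - S / h ^ s := by
      intro X S D
      rw [pow_add, ← div_div]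
      ring
    rw [hfin]
    congr 1
    rw [Finset.sum_div]
    exact Finset.sum_congr rfl fun j _ => by rw [mul_div_assoc]
  -- now the limit
  have T1 := speano hf (P + s) t β
  have T2 : Tendsto (fun h : ℝ => ∑ j, w j * (rem g t s (c j * h) / h ^ s))
      (𝓝[>] (0 : ℝ))
      (𝓝 (∑ j, w j * (c j ^ s * iteratedDeriv (P + s) f t / (s.factorial : ℝ)))) := by
    refine tendsto_finset_sum _ fun j _ => ?_
    have := (speano hgsmooth s t (c j)).const_mul (w j)
    rw [hgm s, Nat.add_comm s P] at this
    exact this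
  have Tfinal := T1.sub T2
  have hfacs : ((s.factorial : ℝ)) ≠ 0 := Nat.cast_ne_zero.mpr s.factorial_ne_zero
  have hfacps : (((P + s).factorial : ℝ)) ≠ 0 := Nat.cast_ne_zero.mpr (P + s).factorial_ne_zero
  have hval : β ^ (P + s) * iteratedDeriv (P + s) f t / (((P + s).factorial : ℕ) : ℝ)
      - ∑ j, w j * (c j ^ s * iteratedDeriv (P + s) f t / (s.factorial : ℝ))
      = (β ^ (P + s) * (s.factorial : ℝ) / (((P + s).factorial : ℕ) : ℝ) - ∑ j, w j * c j ^ s)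
        * iteratedDeriv (P + s) f t / (s.factorial : ℝ) := by
    have hS : ∑ j, w j * (c j ^ s * iteratedDeriv (P + s) f t / (s.factorial : ℝ))
        = (∑ j, w j * c j ^ s) * (iteratedDeriv (P + s) f t / (s.factorial : ℝ)) := by
      rw [Finset.sum_mul]
      exact Finset.sum_congr rfl fun j _ => by ring
    rw [hS]
    field_simp
  rw [← hval]
  refine Tfinal.congr' ?_
  filter_upwards [self_mem_nhdsWithin] with h hh
  exact (key h (ne_of_gt hh)).symm

lemma dd_limit {g : ℝ → ℝ} (hg : ContDiff ℝ ((⊤ : ℕ∞) : WithTop ℕ∞) g)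
    (c lam : Fin s → ℝ) (m : ℕ) (hm : m < s)
    (hlam : ∀ m' : Fin s, ∑ j, lam j * c j ^ (m' : ℕ) = if (m' : ℕ) = m then 1 else 0)
    (t : ℝ) :
    Tendsto (fun h : ℝ => (∑ j, lam j * g (t + c j * h)) / h ^ m) (𝓝[>] (0 : ℝ))
      (𝓝 (iteratedDeriv m g t / (m.factorial : ℝ))) := by
  classical
  have key : ∀ h : ℝ, h ≠ 0 →
      (∑ j, lam j * g (t + c j * h)) / h ^ m
      = (h ^ (s - m)) * ∑ j, lam j * (rem g t s (c j * h) / h ^ s)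
        + iteratedDeriv m g t / (m.factorial : ℝ) := by
    intro h hh
    have hexp : ∑ j, lam j * g (t + c j * h)
        = (∑ j, lam j * rem g t s (c j * h))
          + h ^ m / (m.factorial : ℝ) * iteratedDeriv m g t := by
      have hB : ∀ j : Fin s, g (t + c j * h)
          = rem g t s (c j * h)
            + ∑ m' ∈ Finset.range s,
                (c j * h) ^ m' / (m'.factorial : ℝ) * iteratedDeriv m' g t := by
        intro j; rw [rem]; ring
      simp_rw [hB, mul_add]
      rw [Finset.sum_add_distrib]
      congr 1
      simp_rw [Finset.mul_sum]
      rw [Finset.sum_comm]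
      have hterm : ∀ m' ∈ Finset.range s,
          ∑ j, lam j * ((c j * h) ^ m' / (m'.factorial : ℝ) * iteratedDeriv m' g t)
          = if m' = m then h ^ m' / (m'.factorial : ℝ) * iteratedDeriv m' g t else 0 := by
        intro m' hm'
        have hl : ∑ j, lam j * c j ^ m' = if m' = m then 1 else 0 := by
          simpa using hlam ⟨m', Finset.mem_range.mp hm'⟩
        calc ∑ j, lam j * ((c j * h) ^ m' / (m'.factorial : ℝ) * iteratedDeriv m' g t)
            = (∑ j, lam j * c j ^ m')
              * (h ^ m' / (m'.factorial : ℝ) * iteratedDeriv m' g t) := by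
              rw [Finset.sum_mul]
              refine Finset.sum_congr rfl fun j _ => ?_
              rw [mul_pow]
              ring
          _ = _ := by
              rw [hl]
              split_ifs with hcase
              · rw [one_mul]
              · rw [zero_mul]
      rw [Finset.sum_congr rfl hterm, Finset.sum_ite_eq' (Finset.range s) m]
      rw [if_pos (Finset.mem_range.mpr hm)]
    rw [hexp, add_div]
    congr 1
    · rw [Finset.sum_div, Finset.mul_sum]
      refine Finset.sum_congr rfl fun j _ => ?_
      have hhs : h ^ s = h ^ m * h ^ (s - m) := by
        rw [← pow_add]
        congr 1
        omega
      have h1 : h ^ m ≠ 0 := pow_ne_zero _ hh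
      have h2 : h ^ (s - m) ≠ 0 := pow_ne_zero _ hh
      rw [hhs]
      field_simp
    · have h1 : h ^ m ≠ 0 := pow_ne_zero _ hh
      have h2 : ((m.factorial : ℕ) : ℝ) ≠ 0 := Nat.cast_ne_zero.mpr m.factorial_ne_zero
      field_simp
  have T0 : Tendsto (fun h : ℝ =>
      (h ^ (s - m)) * ∑ j, lam j * (rem g t s (c j * h) / h ^ s)) (𝓝[>] (0:ℝ)) (𝓝 0) := by
    have h1 : Tendsto (fun h : ℝ => h ^ (s - m)) (𝓝[>] (0:ℝ)) (𝓝 0) := by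
      have h2 := (continuous_pow (s - m)).tendsto (0 : ℝ)
      rw [zero_pow (by omega : s - m ≠ 0)] at h2
      exact h2.mono_left nhdsWithin_le_nhds
    have h3 : Tendsto (fun h : ℝ => ∑ j, lam j * (rem g t s (c j * h) / h ^ s))
        (𝓝[>] (0:ℝ))
        (𝓝 (∑ j, lam j * (c j ^ s * iteratedDeriv s g t / (s.factorial : ℝ)))) :=
      tendsto_finset_sum _ fun j _ => (speano hg s t (c j)).const_mul (lam j)
    simpa using h1.mul h3
  have Tfin := T0.add (tendsto_const_nhds
    (x := iteratedDeriv m g t / (m.factorial : ℝ)) (f := 𝓝[>] (0:ℝ)))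
  rw [zero_add] at Tfin
  refine Tfin.congr' ?_
  filter_upwards [self_mem_nhdsWithin] with h hh
  exact (key h (ne_of_gt hh)).symm

end Chunk4

section Chunk5

open Filter Topology Polynomial

variable {s : ℕ}

lemma iter2_eq (f : ℝ → ℝ) : iteratedDeriv 2 f = deriv (deriv f) := by
  rw [show (2 : ℕ) = 1 + 1 from rfl, iteratedDeriv_succ, iteratedDeriv_one]

lemma iter_zero_fun (j : ℕ) : iteratedDeriv j (fun _ : ℝ => (0 : ℝ)) = fun _ => 0 := by
  induction j with
  | zero => simp [iteratedDeriv_zero]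
  | succ j ih =>
      rw [iteratedDeriv_succ',
        show deriv (fun _ : ℝ => (0 : ℝ)) = fun _ : ℝ => (0 : ℝ) from
          funext fun x => deriv_const x 0, ih]

lemma iter_const (j : ℕ) (a : ℝ) (hj : 0 < j) :
    iteratedDeriv j (fun _ : ℝ => a) = fun _ => 0 := by
  obtain ⟨j', rfl⟩ : ∃ j', j = j' + 1 := ⟨j - 1, by omega⟩
  rw [iteratedDeriv_succ',
    show deriv (fun _ : ℝ => a) = fun _ : ℝ => (0 : ℝ) from funext fun x => deriv_const x a,
    iter_zero_fun]

lemma iter_id (j : ℕ) (hj : 2 ≤ j) : iteratedDeriv j (fun x : ℝ => x) = fun _ => 0 := by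
  obtain ⟨j', rfl⟩ : ∃ j', j = j' + 1 := ⟨j - 1, by omega⟩
  rw [iteratedDeriv_succ',
    show deriv (fun x : ℝ => x) = fun _ : ℝ => (1 : ℝ) from funext fun x => deriv_id x,
    iter_const j' 1 (by omega)]

lemma iter_sum {ι : Type*} (S : Finset ι) (f : ι → ℝ → ℝ)
    (hf : ∀ r ∈ S, ContDiff ℝ ((⊤ : ℕ∞) : WithTop ℕ∞) (f r)) (B : ι → ℝ) (j : ℕ) :
    iteratedDeriv j (fun t => ∑ r ∈ S, B r * f r t)
      = fun t => ∑ r ∈ S, B r * iteratedDeriv j (f r) t := by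
  induction j with
  | zero => simp [iteratedDeriv_zero]
  | succ j ih =>
      rw [iteratedDeriv_succ, ih]
      funext t
      have hterm : ∀ r ∈ S, HasDerivAt (fun t => B r * iteratedDeriv j (f r) t)
          (B r * iteratedDeriv (j + 1) (f r) t) t := by
        intro r hr
        have h1 : HasDerivAt (iteratedDeriv j (f r)) (iteratedDeriv (j + 1) (f r) t) t := by
          rw [iteratedDeriv_succ]
          exact ((smooth_diff (smooth_iter (hf r hr) j)) t).hasDerivAt
        exact h1.const_mul (B r)
      exact (HasDerivAt.fun_sum hterm).deriv

lemma seq_of_ae {h₀ : ℝ} (hh₀ : 0 < h₀) {Pr : ℝ → Prop}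
    (hae : ∀ᵐ h ∂(volume.restrict (Set.Ioo (0 : ℝ) h₀)), Pr h) :
    ∃ q : ℕ → ℝ, (∀ n, q n ∈ Set.Ioo (0 : ℝ) h₀ ∧ Pr (q n)) ∧
      Tendsto q atTop (𝓝[>] (0 : ℝ)) := by
  have hmeas : MeasurableSet (Set.Ioo (0 : ℝ) h₀) := measurableSet_Ioo
  have h0 : volume ({h | ¬ Pr h} ∩ Set.Ioo 0 h₀) = 0 := by
    have h1 := hae
    rw [ae_iff] at h1
    rwa [Measure.restrict_apply' hmeas] at h1
  have hexists : ∀ n : ℕ, ∃ x, x ∈ Set.Ioo (0 : ℝ) (min h₀ (1 / (n + 1))) ∧ Pr x := by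
    intro n
    by_contra hcon
    push_neg at hcon
    have hsub : Set.Ioo (0 : ℝ) (min h₀ (1 / (n + 1)))
        ⊆ {h | ¬ Pr h} ∩ Set.Ioo 0 h₀ := by
      intro x hx
      exact ⟨hcon x hx, ⟨hx.1, lt_of_lt_of_le hx.2 (min_le_left _ _)⟩⟩
    have hle : volume (Set.Ioo (0 : ℝ) (min h₀ (1 / (n + 1)))) ≤ 0 := by
      rw [← h0]
      exact measure_mono (μ := (volume : Measure ℝ)) hsub
    have hpos : (0 : ℝ) < min h₀ (1 / (n + 1)) := lt_min hh₀ (by positivity)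
    rw [Real.volume_Ioo] at hle
    simp only [sub_zero] at hle
    have hgt : (0 : ENNReal) < ENNReal.ofReal (min h₀ (1 / (n + 1))) :=
      ENNReal.ofReal_pos.mpr hpos
    exact absurd hle (not_le.mpr hgt)
  choose q hq1 hq2 using hexists
  refine ⟨q, fun n => ⟨⟨(hq1 n).1, lt_of_lt_of_le (hq1 n).2 (min_le_left _ _)⟩, hq2 n⟩, ?_⟩
  apply tendsto_nhdsWithin_of_tendsto_nhds_of_eventually_within
  · have hb : ∀ n : ℕ, q n ≤ 1 / ((n : ℝ) + 1) :=
      fun n => le_of_lt (lt_of_lt_of_le (hq1 n).2 (min_le_right _ _))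
    have ha : ∀ n : ℕ, 0 ≤ q n := fun n => le_of_lt (hq1 n).1
    have hlim : Tendsto (fun n : ℕ => 1 / ((n : ℝ) + 1)) atTop (𝓝 0) :=
      tendsto_one_div_add_atTop_nhds_zero_nat
    exact squeeze_zero ha hb hlim
  · exact Eventually.of_forall fun n => (hq1 n).1

lemma kappa_eq (c : Fin s → ℝ) (w : Fin s → ℝ) (β : ℝ) (P : ℕ)
    (hw : ∀ m : Fin s, ∑ j, w j * c j ^ (m : ℕ)
      = β ^ ((m : ℕ) + P) * (((m : ℕ).factorial : ℕ) : ℝ) / ((((m : ℕ) + P).factorial : ℕ) : ℝ)) :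
    β ^ (P + s) * ((s.factorial : ℕ) : ℝ) / (((P + s).factorial : ℕ) : ℝ) - ∑ j, w j * c j ^ s
    = ∑ m ∈ Finset.range (s + 1), (omP c).coeff m
        * (β ^ (m + P) * ((m.factorial : ℕ) : ℝ) / (((m + P).factorial : ℕ) : ℝ)) := by
  classical
  have hroot : ∀ j : Fin s, c j ^ s = - ∑ m ∈ Finset.range s, (omP c).coeff m * c j ^ m := by
    intro j
    have h0 : (omP c).eval (c j) = 0 := by
      rw [omP_eval]
      exact Finset.prod_eq_zero (Finset.mem_univ j) (sub_self _)
    have h1 := Polynomial.eval_eq_sum_range' (p := omP c) (n := s + 1)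
      (by rw [omP_natDegree]; omega) (c j)
    rw [h0, Finset.sum_range_succ, omP_coeff_top, one_mul] at h1
    linarith [h1]
  have hWs : ∑ j, w j * c j ^ s
      = - ∑ m ∈ Finset.range s, (omP c).coeff m
          * (β ^ (m + P) * ((m.factorial : ℕ) : ℝ) / (((m + P).factorial : ℕ) : ℝ)) := by
    have e1 : ∀ j : Fin s, w j * c j ^ s
        = ∑ m ∈ Finset.range s, -((omP c).coeff m) * (w j * c j ^ m) := by
      intro j
      rw [hroot j, mul_neg, Finset.mul_sum, ← Finset.sum_neg_distrib]
      exact Finset.sum_congr rfl fun m _ => by ring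
    rw [Finset.sum_congr rfl fun j _ => e1 j, Finset.sum_comm, ← Finset.sum_neg_distrib]
    refine Finset.sum_congr rfl fun m hm => ?_
    have hwm : ∑ j, w j * c j ^ m
        = β ^ (m + P) * ((m.factorial : ℕ) : ℝ) / (((m + P).factorial : ℕ) : ℝ) := by
      simpa using hw ⟨m, Finset.mem_range.mp hm⟩
    rw [← Finset.mul_sum, hwm]
    ring
  rw [hWs, Finset.sum_range_succ, omP_coeff_top, one_mul, Nat.add_comm s P]
  ring

lemma exists_relation {N n : ℕ} (hNn : n < N) (v : Fin N → (Fin n → ℝ)) :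
    ∃ γ : Fin N → ℝ, (∑ m, γ m • v m = 0) ∧ γ ≠ 0 := by
  by_contra hcon
  push_neg at hcon
  have hli : LinearIndependent ℝ v := by
    rw [Fintype.linearIndependent_iff]
    intro γ hγ
    by_contra hne
    push_neg at hne
    obtain ⟨i, hi⟩ := hne
    exact hi (congrFun (hcon γ hγ) i ▸ rfl)
  have hcard := hli.fintype_card_le_finrank
  rw [Module.finrank_pi] at hcard
  simp [Fintype.card_fin] at hcard
  omega

lemma eval_FP (c : Fin s → ℝ) (x : ℝ) :
    (FP c).eval x = ∑ m ∈ Finset.range (s + 1), (omP c).coeff m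
      * (x ^ (m + 2) * ((m.factorial : ℕ) : ℝ) / (((m + 2).factorial : ℕ) : ℝ)) := by
  rw [FP, Polynomial.eval_finset_sum]
  refine Finset.sum_congr rfl fun m _ => ?_
  rw [Polynomial.eval_mul, Polynomial.eval_C, Polynomial.eval_pow, Polynomial.eval_X]
  have hfac : (((m + 2).factorial : ℕ) : ℝ) = ((m : ℝ) + 2) * (((m : ℝ) + 1) * (m.factorial : ℝ)) := by
    rw [show m + 2 = (m + 1) + 1 from rfl, Nat.factorial_succ, Nat.factorial_succ]
    push_cast
    ring
  rw [hfac]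
  have h1 : ((m : ℝ) + 1) ≠ 0 := by positivity
  have h2 : ((m : ℝ) + 2) ≠ 0 := by positivity
  have h3 : ((m.factorial : ℕ) : ℝ) ≠ 0 := Nat.cast_ne_zero.mpr m.factorial_ne_zero
  field_simp

lemma eval_FP_deriv (c : Fin s → ℝ) (x : ℝ) :
    (derivative (FP c)).eval x = ∑ m ∈ Finset.range (s + 1), (omP c).coeff m
      * (x ^ (m + 1) * ((m.factorial : ℕ) : ℝ) / (((m + 1).factorial : ℕ) : ℝ)) := by
  rw [FP_deriv, Polynomial.eval_finset_sum]
  refine Finset.sum_congr rfl fun m _ => ?_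
  rw [Polynomial.eval_mul, Polynomial.eval_C, Polynomial.eval_pow, Polynomial.eval_X]
  have hfac : (((m + 1).factorial : ℕ) : ℝ) = ((m : ℝ) + 1) * (m.factorial : ℝ) := by
    rw [Nat.factorial_succ]
    push_cast
    ring
  rw [hfac]
  have h1 : ((m : ℝ) + 1) ≠ 0 := by positivity
  have h3 : ((m.factorial : ℕ) : ℝ) ≠ 0 := Nat.cast_ne_zero.mpr m.factorial_ne_zero
  field_simp

end Chunk5

section Chunk6

open Filter Topology

variable {s : ℕ}

lemma core (hs : 0 < s) (c : Fin s → ℝ) (hc : Function.Injective c)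
    (u : Fin s → ℝ → ℝ) (hu : ∀ k, ContDiff ℝ ((⊤ : ℕ∞) : WithTop ℕ∞) (u k))
    (β : ℝ) (P : ℕ)
    (F : Fin s → ℝ → ℝ) (hF : ∀ k, ContDiff ℝ ((⊤ : ℕ∞) : WithTop ℕ∞) (F k))
    (hFg : ∀ k, iteratedDeriv P (F k) = iteratedDeriv 2 (u k))
    (w : Fin s → ℝ)
    (hw : ∀ m : Fin s, ∑ j, w j * c j ^ (m : ℕ)
      = β ^ ((m : ℕ) + P) * (((m : ℕ).factorial : ℕ) : ℝ) / ((((m : ℕ) + P).factorial : ℕ) : ℝ))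
    (hκ : β ^ (P + s) * ((s.factorial : ℕ) : ℝ) / (((P + s).factorial : ℕ) : ℝ)
        - ∑ j, w j * c j ^ s ≠ 0)
    (q : ℕ → ℝ) (hqpos : ∀ n, 0 < q n) (hq : Tendsto q atTop (𝓝[>] (0 : ℝ)))
    (V : ℕ → Fin s → ℝ)
    (heqn : ∀ n, ∀ t : ℝ, ∀ k,
      F k (t + β * q n) - ∑ m ∈ Finset.range P,
          (β * q n) ^ m / (m.factorial : ℝ) * iteratedDeriv m (F k) t
      = (q n) ^ P * ∑ j, V n j * iteratedDeriv 2 (u k) (t + c j * q n)) :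
    ∃ α : Fin (s + 1) → ℝ, α ≠ 0 ∧ ∀ t k,
      ∑ m : Fin (s + 1), α m * iteratedDeriv (m : ℕ) (iteratedDeriv 2 (u k)) t = 0 := by
  classical
  set κ : ℝ := β ^ (P + s) * ((s.factorial : ℕ) : ℝ) / (((P + s).factorial : ℕ) : ℝ)
    - ∑ j, w j * c j ^ s with hκdef
  set g : Fin s → ℝ → ℝ := fun k => iteratedDeriv 2 (u k) with hgdef
  have hgsmooth : ∀ k, ContDiff ℝ ((⊤ : ℕ∞) : WithTop ℕ∞) (g k) :=
    fun k => smooth_iter (hu k) 2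
  have hsfac : ((s.factorial : ℕ) : ℝ) ≠ 0 := Nat.cast_ne_zero.mpr s.factorial_ne_zero
  -- Kronecker divided-difference vectors
  have hlamex : ∀ m0 : Fin s, ∃ lam : Fin s → ℝ,
      ∀ m' : Fin s, ∑ j, lam j * c j ^ (m' : ℕ) = if (m' : ℕ) = (m0 : ℕ) then 1 else 0 := by
    intro m0
    obtain ⟨lam, hl⟩ := vandermonde_solve hc
      (fun m' => if (m' : ℕ) = (m0 : ℕ) then 1 else 0)
    exact ⟨lam, hl⟩
  choose lam hlam using hlamex
  -- member coefficient vectors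
  set θ : Fin (s + 1) → ℕ → (Fin s → ℝ) := fun m n =>
    if hm : (m : ℕ) < s then fun j => lam ⟨(m : ℕ), hm⟩ j / (q n) ^ (m : ℕ)
    else fun j => (s.factorial : ℝ) * (V n j - w j) / (κ * (q n) ^ s) with hθdef
  -- limit targets
  set L : Fin (s + 1) → Fin s → ℝ → ℝ := fun m k t =>
    if (m : ℕ) < s then iteratedDeriv (m : ℕ) (g k) t / (((m : ℕ).factorial : ℕ) : ℝ)
    else iteratedDeriv s (g k) t with hLdef
  have hmem : ∀ (m : Fin (s + 1)) (t : ℝ) (k : Fin s),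
      Tendsto (fun n => ∑ j, θ m n j * g k (t + c j * q n)) atTop (𝓝 (L m k t)) := by
    intro m t k
    by_cases hm : (m : ℕ) < s
    · have hdd := (dd_limit (hgsmooth k) c (lam ⟨(m : ℕ), hm⟩) (m : ℕ) hm
        (hlam ⟨(m : ℕ), hm⟩) t).comp hq
      have hLm : L m k t = iteratedDeriv (m : ℕ) (g k) t / (((m : ℕ).factorial : ℕ) : ℝ) := by
        rw [hLdef]; simp only [if_pos hm]
      rw [hLm]
      refine Tendsto.congr' ?_ hdd
      filter_upwards with n
      show (∑ j, lam ⟨(m : ℕ), hm⟩ j * g k (t + c j * q n)) / (q n) ^ (m : ℕ) = _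
      rw [Finset.sum_div]
      refine Finset.sum_congr rfl fun j _ => ?_
      rw [hθdef]
      simp only [dif_pos hm]
      ring
    · have hms : (m : ℕ) = s := by omega
      have hml := (member_limit (hF k) P β c w hw t).comp hq
      have hiter : iteratedDeriv (P + s) (F k) = iteratedDeriv s (g k) := by
        calc iteratedDeriv (P + s) (F k) = iteratedDeriv (s + P) (F k) := by rw [Nat.add_comm]
          _ = iteratedDeriv s (iteratedDeriv P (F k)) := (iter_iter _ s P).symm
          _ = iteratedDeriv s (g k) := by rw [hFg k, hgdef]
      have hscaled := hml.const_mul ((s.factorial : ℝ) / κ)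
      have hLm : L m k t = iteratedDeriv s (g k) t := by
        rw [hLdef]; simp only [if_neg hm]
      have hvalue : (s.factorial : ℝ) / κ *
          (κ * iteratedDeriv (P + s) (F k) t / ((s.factorial : ℕ) : ℝ))
          = iteratedDeriv s (g k) t := by
        rw [hiter]
        field_simp
      have hPg : iteratedDeriv P (F k) = g k := by
        rw [hgdef]
        exact hFg k
      rw [hLm, ← hvalue]
      refine Tendsto.congr' ?_ hscaled
      filter_upwards with n
      simp only [Function.comp_apply]
      have hn0 : q n ≠ 0 := (hqpos n).ne'
      have hstep : (F k (t + β * q n) - ∑ mm ∈ Finset.range P,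
            (β * q n) ^ mm / (mm.factorial : ℝ) * iteratedDeriv mm (F k) t) / (q n) ^ P
          = ∑ j, V n j * g k (t + c j * q n) := by
        show _ = ∑ j, V n j * iteratedDeriv 2 (u k) (t + c j * q n)
        rw [heqn n t k, mul_div_cancel_left₀ _ (pow_ne_zero _ hn0)]
      have hrhs : ∑ j, θ m n j * g k (t + c j * q n)
          = (s.factorial : ℝ) / κ *
            ((∑ j, V n j * g k (t + c j * q n)
              - ∑ j, w j * g k (t + c j * q n)) / (q n) ^ s) := by
        rw [← Finset.sum_sub_distrib]
        rw [Finset.sum_div, Finset.mul_sum]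
        refine Finset.sum_congr rfl fun j _ => ?_
        rw [hθdef]
        simp only [dif_neg hm]
        have hqs : (q n) ^ s ≠ 0 := pow_ne_zero _ hn0
        field_simp
      rw [hrhs, ← hstep, hPg]
  -- dependence relations
  have hdep : ∀ n, ∃ γ : Fin (s + 1) → ℝ, (∑ m, γ m • θ m n = 0) ∧ γ ≠ 0 :=
    fun n => exists_relation (by omega) (fun m => θ m n)
  choose γ hγ0 hγne using hdep
  set γ' : ℕ → Fin (s + 1) → ℝ := fun n => (‖γ n‖)⁻¹ • γ n with hγ'def
  have hnorm : ∀ n, ‖γ' n‖ = 1 := by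
    intro n
    rw [hγ'def]
    simp only [norm_smul, norm_inv, norm_norm]
    rw [inv_mul_cancel₀ (norm_ne_zero_iff.mpr (hγne n))]
  have hsphere : ∀ n, γ' n ∈ Metric.sphere (0 : Fin (s + 1) → ℝ) 1 := by
    intro n
    rw [mem_sphere_zero_iff_norm]
    exact hnorm n
  obtain ⟨γs, hγsmem, φ, hφmono, hφlim⟩ :=
    (isCompact_sphere (0 : Fin (s + 1) → ℝ) 1).tendsto_subseq hsphere
  have hγs1 : ‖γs‖ = 1 := mem_sphere_zero_iff_norm.mp hγsmem
  -- vanishing combinations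
  have hvanish : ∀ n (t : ℝ) k,
      ∑ m, γ' n m * (∑ j, θ m n j * g k (t + c j * q n)) = 0 := by
    intro n t k
    have h1 : ∑ m, γ' n m • θ m n = (0 : Fin s → ℝ) := by
      have h2 : ∑ m, γ' n m • θ m n = (‖γ n‖)⁻¹ • ∑ m, γ n m • θ m n := by
        rw [Finset.smul_sum]
        refine Finset.sum_congr rfl fun m _ => ?_
        rw [smul_smul]
        congr 1
      rw [h2, hγ0 n, smul_zero]
    have h3 : ∀ j, ∑ m, γ' n m * θ m n j = 0 := by
      intro j
      have := congrFun h1 j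
      rw [Finset.sum_apply] at this
      simpa using this
    calc ∑ m, γ' n m * (∑ j, θ m n j * g k (t + c j * q n))
        = ∑ j, (∑ m, γ' n m * θ m n j) * g k (t + c j * q n) := by
          simp_rw [Finset.mul_sum]
          rw [Finset.sum_comm]
          refine Finset.sum_congr rfl fun j _ => ?_
          rw [Finset.sum_mul]
          exact Finset.sum_congr rfl fun m _ => by ring
      _ = 0 := by
          refine Finset.sum_eq_zero fun j _ => ?_
          rw [h3 j, zero_mul]
  -- pass to the limit
  have hrel : ∀ (t : ℝ) k, ∑ m, γs m * L m k t = 0 := by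
    intro t k
    have hlimit : Tendsto (fun n =>
        ∑ m, γ' (φ n) m * (∑ j, θ m (φ n) j * g k (t + c j * q (φ n)))) atTop
        (𝓝 (∑ m, γs m * L m k t)) := by
      refine tendsto_finset_sum _ fun m _ => ?_
      refine Tendsto.mul ?_ ?_
      · exact ((continuous_apply m).tendsto γs).comp hφlim
      · exact (hmem m t k).comp hφmono.tendsto_atTop
    have hzero : (fun n =>
        ∑ m, γ' (φ n) m * (∑ j, θ m (φ n) j * g k (t + c j * q (φ n))))
        = fun _ => (0 : ℝ) := funext fun n => hvanish (φ n) t k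
    rw [hzero] at hlimit
    exact tendsto_nhds_unique hlimit tendsto_const_nhds
  -- construct α
  refine ⟨fun m => if (m : ℕ) < s then γs m / (((m : ℕ).factorial : ℕ) : ℝ) else γs m, ?_, ?_⟩
  · intro hα0
    have hγs0 : γs = 0 := by
      funext m
      have := congrFun hα0 m
      by_cases hm : (m : ℕ) < s
      · rw [if_pos hm] at this
        have hfm : (((m : ℕ).factorial : ℕ) : ℝ) ≠ 0 :=
          Nat.cast_ne_zero.mpr (m : ℕ).factorial_ne_zero
        simpa [div_eq_zero_iff, hfm] using this
      · rwa [if_neg hm] at this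
    rw [hγs0] at hγs1
    simp at hγs1
  · intro t k
    have h := hrel t k
    rw [← h]
    refine Finset.sum_congr rfl fun m _ => ?_
    simp only [hLdef, hgdef]
    split_ifs with hm
    · ring
    · have hms : (m : ℕ) = s := by omega
      rw [hms]

end Chunk6

section Chunk7

open Filter Topology

variable {s : ℕ}

lemma final (u : Fin s → ℝ → ℝ) (hu : ∀ k, ContDiff ℝ ((⊤ : ℕ∞) : WithTop ℕ∞) (u k))
    (hind : LinearIndependent ℝ
      (Fin.cons (fun _ : ℝ => (1 : ℝ)) (Fin.cons (fun x : ℝ => x) u) : Fin (s + 2) → ℝ → ℝ))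
    (α : Fin (s + 1) → ℝ) (hα : α ≠ 0)
    (hrel : ∀ (t : ℝ) k, ∑ m : Fin (s + 1),
      α m * iteratedDeriv (m : ℕ) (iteratedDeriv 2 (u k)) t = 0) :
    ∀ k, deriv (u k) ∈ Submodule.span ℝ
      (Set.range (Fin.cons (fun _ : ℝ => (1 : ℝ)) (Fin.cons (fun x : ℝ => x) u) :
        Fin (s + 2) → ℝ → ℝ)) := by
  classical
  intro k₀
  set U : Fin (s + 2) → ℝ → ℝ :=
    Fin.cons (fun _ : ℝ => (1 : ℝ)) (Fin.cons (fun x : ℝ => x) u) with hU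
  have hUsm : ∀ r, ContDiff ℝ ((⊤ : ℕ∞) : WithTop ℕ∞) (U r) := by
    intro r
    refine Fin.cases ?_ (fun r' => ?_) r
    · rw [hU, Fin.cons_zero]; exact contDiff_const
    · rw [hU, Fin.cons_succ]
      refine Fin.cases ?_ (fun k => ?_) r'
      · rw [Fin.cons_zero]; exact contDiff_id
      · rw [Fin.cons_succ]; exact hu k
  -- natural-number indexed coefficients
  set αn : ℕ → ℝ := fun m => if h : m < s + 1 then α ⟨m, h⟩ else 0 with hαn
  have hrelN : ∀ (t : ℝ) k,
      ∑ m ∈ Finset.range (s + 1), αn m * iteratedDeriv (m + 2) (u k) t = 0 := by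
    intro t k
    have h1 := hrel t k
    rw [← Fin.sum_univ_eq_sum_range (fun m => αn m * iteratedDeriv (m + 2) (u k) t) (s + 1)]
    rw [← h1]
    refine Finset.sum_congr rfl fun m _ => ?_
    rw [hαn]
    simp only [dif_pos m.isLt, Fin.eta]
    rw [iter_iter]
  -- the leading index
  have hexm : ∃ m, m ≤ s ∧ αn m ≠ 0 := by
    rcases Function.ne_iff.mp hα with ⟨m, hm⟩
    refine ⟨(m : ℕ), by omega, ?_⟩
    rw [hαn]
    simp only [dif_pos m.isLt, Fin.eta]
    simpa using hm
  obtain ⟨m0, hm0s, hm0⟩ := hexm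
  set D := Nat.findGreatest (fun m => αn m ≠ 0) s with hDdef
  have hDspec : αn D ≠ 0 := Nat.findGreatest_spec (P := fun m => αn m ≠ 0) hm0s hm0
  have hDle : D ≤ s := Nat.findGreatest_le s
  have hDhigh : ∀ m, D < m → αn m = 0 := by
    intro m hm
    by_cases hms : m ≤ s
    · by_contra hne
      exact absurd (Nat.le_findGreatest hms hne) (not_le.mpr hm)
    · rw [hαn]; exact dif_neg (by omega)
  -- reduced relation
  have hrel2 : ∀ (t : ℝ) k, iteratedDeriv (D + 2) (u k) t
      = ∑ m ∈ Finset.range D, (-αn m / αn D) * iteratedDeriv (m + 2) (u k) t := by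
    intro t k
    have h1 : ∑ m ∈ Finset.range (D + 1), αn m * iteratedDeriv (m + 2) (u k) t = 0 := by
      rw [Finset.sum_subset (Finset.range_subset_range.mpr (by omega : D + 1 ≤ s + 1)) ?_]
      · exact hrelN t k
      · intro x _ hx
        rw [Finset.mem_range, not_lt] at hx
        rw [hDhigh x (by omega), zero_mul]
    rw [Finset.sum_range_succ] at h1
    have h2 : iteratedDeriv (D + 2) (u k) t
        = (- ∑ m ∈ Finset.range D, αn m * iteratedDeriv (m + 2) (u k) t) / αn D := by
      field_simp
      linarith [h1]
    rw [h2, ← Finset.sum_neg_distrib, Finset.sum_div]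
    exact Finset.sum_congr rfl fun m _ => by ring
  -- ODE coefficients
  set an : ℕ → ℝ := fun i => if 2 ≤ i then -αn (i - 2) / αn D else 0 with han
  have hconv : ∀ (y : ℝ → ℝ) (t : ℝ),
      ∑ i : Fin (D + 2), an (i : ℕ) * iteratedDeriv (i : ℕ) y t
      = ∑ m ∈ Finset.range D, (-αn m / αn D) * iteratedDeriv (m + 2) y t := by
    intro y t
    rw [Fin.sum_univ_eq_sum_range (fun i => an i * iteratedDeriv i y t) (D + 2)]
    have hfirst : ∑ i ∈ Finset.Ico 0 2, an i * iteratedDeriv i y t = 0 := by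
      have h01 : Finset.Ico 0 2 = ({0, 1} : Finset ℕ) := by decide
      rw [h01]
      rw [Finset.sum_insert (by decide), Finset.sum_singleton]
      rw [han]
      norm_num
    have hsplit : ∑ i ∈ Finset.range (D + 2), an i * iteratedDeriv i y t
        = (∑ i ∈ Finset.Ico 0 2, an i * iteratedDeriv i y t)
          + ∑ i ∈ Finset.Ico 2 (2 + D), an i * iteratedDeriv i y t := by
      rw [Finset.range_eq_Ico, show D + 2 = 2 + D by omega]
      exact (Finset.sum_Ico_consecutive _ (Nat.zero_le 2) (Nat.le_add_right 2 D)).symm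
    rw [hsplit, hfirst, zero_add, Finset.sum_Ico_eq_sum_range,
      show 2 + D - 2 = D from by omega]
    refine Finset.sum_congr rfl fun m _ => ?_
    simp only [han, if_pos (by omega : 2 ≤ 2 + m), if_pos (by omega : 2 ≤ m + 2),
      show 2 + m - 2 = m from by omega, show m + 2 - 2 = m from by omega,
      Nat.add_comm 2 m]
  -- the solution property
  have hSolU : ∀ (r : Fin (s + 2)) (t : ℝ), iteratedDeriv (D + 2) (U r) t
      = ∑ i : Fin (D + 2), an (i : ℕ) * iteratedDeriv (i : ℕ) (U r) t := by
    intro r t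
    rw [hconv]
    refine Fin.cases ?_ (fun r' => ?_) r
    · rw [hU, Fin.cons_zero, iter_const _ _ (by omega)]
      rw [Finset.sum_eq_zero fun m _ => by rw [iter_const _ _ (by omega)]; simp]
    · rw [hU, Fin.cons_succ]
      refine Fin.cases ?_ (fun k => ?_) r'
      · rw [Fin.cons_zero, iter_id _ (by omega)]
        rw [Finset.sum_eq_zero fun m _ => by rw [iter_id _ (by omega)]; simp]
      · rw [Fin.cons_succ]
        exact hrel2 t k
  -- combinations of solutions
  have hSolsum : ∀ (B : Fin (s + 2) → ℝ) (t : ℝ),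
      iteratedDeriv (D + 2) (fun x => ∑ r, B r * U r x) t
      = ∑ i : Fin (D + 2), an (i : ℕ)
          * iteratedDeriv (i : ℕ) (fun x => ∑ r, B r * U r x) t := by
    intro B t
    have hud : ∀ (j : ℕ), iteratedDeriv j (fun x => ∑ r, B r * U r x)
        = fun x => ∑ r, B r * iteratedDeriv j (U r) x :=
      fun j => iter_sum Finset.univ U (fun r _ => hUsm r) B j
    simp only [hud]
    calc ∑ r, B r * iteratedDeriv (D + 2) (U r) t
        = ∑ r, B r * ∑ i : Fin (D + 2), an (i : ℕ) * iteratedDeriv (i : ℕ) (U r) t :=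
          Finset.sum_congr rfl fun r _ => by rw [hSolU r t]
      _ = ∑ i : Fin (D + 2), an (i : ℕ) * ∑ r, B r * iteratedDeriv (i : ℕ) (U r) t := by
          simp_rw [Finset.mul_sum]
          rw [Finset.sum_comm]
          exact Finset.sum_congr rfl fun i _ => Finset.sum_congr rfl fun r _ => by ring
  -- smoothness of combinations
  have hcomb_smooth : ∀ B : Fin (s + 2) → ℝ, ContDiff ℝ ((⊤ : ℕ∞) : WithTop ℕ∞)
      (fun x => ∑ r, B r * U r x) :=
    fun B => ContDiff.sum fun r _ => contDiff_const.mul (hUsm r)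
  -- uniqueness: zero data implies zero
  have hunique : ∀ B : Fin (s + 2) → ℝ,
      (∀ i : Fin (D + 2), ∑ r, B r * iteratedDeriv (i : ℕ) (U r) 0 = 0) →
      ∀ x, ∑ r, B r * U r x = 0 := by
    intro B hB0
    have hz := ode_zero (D + 2) (by omega) (fun i => an (i : ℕ))
      (fun x => ∑ r, B r * U r x) (hcomb_smooth B) (fun t => hSolsum B t) ?_
    · intro x; simpa using hz x
    · intro i
      rw [iter_sum Finset.univ U (fun r _ => hUsm r) B (i : ℕ)]
      exact hB0 i
  -- initial data vectors
  set ι : Fin (s + 2) → (Fin (D + 2) → ℝ) := fun r i => iteratedDeriv (i : ℕ) (U r) 0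
    with hι
  have hιli : LinearIndependent ℝ ι := by
    rw [Fintype.linearIndependent_iff]
    intro B hB
    have hB0 : ∀ i : Fin (D + 2), ∑ r, B r * iteratedDeriv (i : ℕ) (U r) 0 = 0 := by
      intro i
      have h1 := congrFun hB i
      rw [Finset.sum_apply] at h1
      simpa [hι] using h1
    have hzz := hunique B hB0
    have h2 : ∑ r, B r • U r = 0 := by
      funext x
      rw [Finset.sum_apply]
      simpa [smul_eq_mul] using hzz x
    exact Fintype.linearIndependent_iff.mp hind B h2
  have hcard := hιli.fintype_card_le_finrank
  rw [Module.finrank_pi] at hcard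
  simp only [Fintype.card_fin] at hcard
  have hDs : D = s := by omega
  have hcardeq : Fintype.card (Fin (s + 2)) = Module.finrank ℝ (Fin (D + 2) → ℝ) := by
    rw [Module.finrank_pi]
    simp [hDs]
  set bas := basisOfLinearIndependentOfCardEqFinrank hιli hcardeq with hbas
  set ξ : Fin (D + 2) → ℝ := fun i => iteratedDeriv (i : ℕ) (deriv (u k₀)) 0 with hξ
  set B : Fin (s + 2) → ℝ := fun r => (bas.repr ξ) r with hBdef
  have hrepr : ∑ r, B r • ι r = ξ := by
    have h1 := bas.sum_repr ξ
    rwa [hbas, coe_basisOfLinearIndependentOfCardEqFinrank] at h1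
  -- solution property of u k and of deriv (u k₀)
  have hSolu' : ∀ (t : ℝ) (k : Fin s), iteratedDeriv (D + 2) (u k) t
      = ∑ i : Fin (D + 2), an (i : ℕ) * iteratedDeriv (i : ℕ) (u k) t := by
    intro t k
    rw [hconv]
    exact hrel2 t k
  have hders : ∀ (j : ℕ) (x : ℝ),
      HasDerivAt (iteratedDeriv j (u k₀)) (iteratedDeriv (j + 1) (u k₀) x) x := by
    intro j x
    rw [iteratedDeriv_succ]
    exact ((smooth_diff (smooth_iter (hu k₀) j)) x).hasDerivAt
  have hSolderiv : ∀ t : ℝ, iteratedDeriv (D + 2) (deriv (u k₀)) t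
      = ∑ i : Fin (D + 2), an (i : ℕ) * iteratedDeriv (i : ℕ) (deriv (u k₀)) t := by
    intro t
    have hΦder : HasDerivAt (fun x => iteratedDeriv (D + 2) (u k₀) x
        - ∑ i : Fin (D + 2), an (i : ℕ) * iteratedDeriv (i : ℕ) (u k₀) x)
        (iteratedDeriv (D + 3) (u k₀) t
          - ∑ i : Fin (D + 2), an (i : ℕ) * iteratedDeriv ((i : ℕ) + 1) (u k₀) t) t := by
      refine HasDerivAt.sub ?_ ?_
      · exact hders (D + 2) t
      · exact HasDerivAt.fun_sum fun i _ => (hders (i : ℕ) t).const_mul _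
    have hΦ0 : (fun x => iteratedDeriv (D + 2) (u k₀) x
        - ∑ i : Fin (D + 2), an (i : ℕ) * iteratedDeriv (i : ℕ) (u k₀) x)
        = fun _ : ℝ => (0 : ℝ) := by
      funext x
      rw [hSolu' x k₀, sub_self]
    rw [hΦ0] at hΦder
    have heqd := hΦder.unique (hasDerivAt_const t 0)
    have hsucc : ∀ j : ℕ, iteratedDeriv j (deriv (u k₀)) = iteratedDeriv (j + 1) (u k₀) :=
      fun j => (iteratedDeriv_succ' (n := j)).symm
    rw [hsucc (D + 2)]
    have hsum2 : ∑ i : Fin (D + 2), an (i : ℕ) * iteratedDeriv (i : ℕ) (deriv (u k₀)) t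
        = ∑ i : Fin (D + 2), an (i : ℕ) * iteratedDeriv ((i : ℕ) + 1) (u k₀) t :=
      Finset.sum_congr rfl fun i _ => by rw [hsucc (i : ℕ)]
    rw [hsum2]
    have hD3 : D + 2 + 1 = D + 3 := rfl
    rw [hD3]
    linarith [heqd]
  -- the difference function
  set z : ℝ → ℝ := fun x => deriv (u k₀) x - ∑ r, B r * U r x with hzdef
  have hzsm : ContDiff ℝ ((⊤ : ℕ∞) : WithTop ℕ∞) z :=
    (smooth_deriv (hu k₀)).sub (hcomb_smooth B)
  have hziter : ∀ j : ℕ, iteratedDeriv j z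
      = fun x => iteratedDeriv j (deriv (u k₀)) x
        - iteratedDeriv j (fun x => ∑ r, B r * U r x) x := by
    intro j
    induction j with
    | zero => simp [iteratedDeriv_zero, hzdef]
    | succ j ih =>
        rw [iteratedDeriv_succ, ih]
        funext x
        have h1 : HasDerivAt (iteratedDeriv j (deriv (u k₀)))
            (iteratedDeriv (j + 1) (deriv (u k₀)) x) x := by
          rw [iteratedDeriv_succ]
          exact ((smooth_diff (smooth_iter (smooth_deriv (hu k₀)) j)) x).hasDerivAt
        have h2 : HasDerivAt (iteratedDeriv j (fun x => ∑ r, B r * U r x))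
            (iteratedDeriv (j + 1) (fun x => ∑ r, B r * U r x) x) x := by
          rw [iteratedDeriv_succ]
          exact ((smooth_diff (smooth_iter (hcomb_smooth B) j)) x).hasDerivAt
        exact (h1.sub h2).deriv
  have hzeq : ∀ t : ℝ, iteratedDeriv (D + 2) z t
      = ∑ i : Fin (D + 2), an (i : ℕ) * iteratedDeriv (i : ℕ) z t := by
    intro t
    simp only [hziter]
    rw [hSolderiv t, hSolsum B t, ← Finset.sum_sub_distrib]
    exact Finset.sum_congr rfl fun i _ => by ring
  have hzdata : ∀ i : Fin (D + 2), iteratedDeriv (i : ℕ) z 0 = 0 := by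
    intro i
    simp only [hziter, iter_sum Finset.univ U (fun r _ => hUsm r) B (i : ℕ)]
    have h1 := congrFun hrepr i
    rw [Finset.sum_apply] at h1
    simp only [Pi.smul_apply, smul_eq_mul, hι, hξ] at h1
    rw [h1, sub_self]
  have hzzero := ode_zero (D + 2) (by omega) (fun i => an (i : ℕ)) z hzsm hzeq hzdata
  have hfinal : deriv (u k₀) = fun x => ∑ r, B r * U r x := by
    funext x
    have h1 := hzzero x
    simp only [hzdef] at h1
    linarith [h1]
  rw [hfinal]
  have hform : (fun x => ∑ r, B r * U r x) = ∑ r, B r • U r := by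
    funext x
    rw [Finset.sum_apply]
    simp [smul_eq_mul]
  rw [hform]
  exact Submodule.sum_mem _ fun r _ =>
    Submodule.smul_mem _ _ (Submodule.subset_span (Set.mem_range_self r))

end Chunk7

end
end FRKNAux

open Matrix BigOperators MeasureTheory

theorem stmt_9 (s : ℕ) (c : Fin s → ℝ) (hc : Function.Injective c)
    (u : Fin s → ℝ → ℝ) (hu : ∀ k, ContDiff ℝ (⊤ : ℕ∞) (u k))
    (hind : LinearIndependent ℝ
      (Fin.cons (fun _ : ℝ => (1 : ℝ)) (Fin.cons (fun x : ℝ => x) u) :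
        Fin (s + 2) → ℝ → ℝ))
    (h₀ : ℝ) (hh₀ : 0 < h₀)
    (A : ℝ → Matrix (Fin s) (Fin s) ℝ) (b d : ℝ → Fin s → ℝ)
    (hfit : ∀ᵐ h ∂(volume.restrict (Set.Ioo (0 : ℝ) h₀)), ∀ t : ℝ, ∀ k : Fin s,
      (u k (t + h) = u k t + h * deriv (u k) t +
        h ^ 2 * ∑ j, b h j * deriv (deriv (u k)) (t + c j * h)) ∧
      (deriv (u k) (t + h) = deriv (u k) t +
        h * ∑ j, d h j * deriv (deriv (u k)) (t + c j * h)) ∧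
      (∀ i, u k (t + c i * h) = u k t + c i * h * deriv (u k) t +
        h ^ 2 * ∑ j, A h i j * deriv (deriv (u k)) (t + c j * h))) :
    ∀ k, deriv (u k) ∈ Submodule.span ℝ
      (Set.range
        (Fin.cons (fun _ : ℝ => (1 : ℝ)) (Fin.cons (fun x : ℝ => x) u) :
          Fin (s + 2) → ℝ → ℝ)) := by
  classical
  have husm : ∀ k, ContDiff ℝ ((⊤ : ℕ∞) : WithTop ℕ∞) (u k) := fun k => (hu k).of_le (by simp)
  rcases Nat.eq_zero_or_pos s with hs0 | hs
  · subst hs0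
    intro k
    exact k.elim0
  obtain ⟨q, hqmem, hqtend⟩ := FRKNAux.seq_of_ae hh₀ hfit
  have hqpos : ∀ n, 0 < q n := fun n => (hqmem n).1.1
  have hg2 : ∀ k, deriv (deriv (u k)) = iteratedDeriv 2 (u k) :=
    fun k => (FRKNAux.iter2_eq (u k)).symm
  suffices hαrel : ∃ α : Fin (s + 1) → ℝ, α ≠ 0 ∧ ∀ (t : ℝ) k,
      ∑ m : Fin (s + 1), α m * iteratedDeriv (m : ℕ) (iteratedDeriv 2 (u k)) t = 0 by
    obtain ⟨α, hα, hrel⟩ := hαrel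
    exact FRKNAux.final u husm hind α hα hrel
  have instantiate : ∀ (β : ℝ) (P : ℕ) (F : Fin s → ℝ → ℝ),
      (∀ k, ContDiff ℝ ((⊤ : ℕ∞) : WithTop ℕ∞) (F k)) →
      (∀ k, iteratedDeriv P (F k) = iteratedDeriv 2 (u k)) →
      ∀ (V : ℕ → Fin s → ℝ),
      (∀ n (t : ℝ) k, F k (t + β * q n) - ∑ m ∈ Finset.range P,
          (β * q n) ^ m / (m.factorial : ℝ) * iteratedDeriv m (F k) t
        = (q n) ^ P * ∑ j, V n j * iteratedDeriv 2 (u k) (t + c j * q n)) →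
      (∑ m ∈ Finset.range (s + 1), (FRKNAux.omP c).coeff m
          * (β ^ (m + P) * ((m.factorial : ℕ) : ℝ) / (((m + P).factorial : ℕ) : ℝ)) ≠ 0) →
      ∃ α : Fin (s + 1) → ℝ, α ≠ 0 ∧ ∀ (t : ℝ) k,
        ∑ m : Fin (s + 1), α m * iteratedDeriv (m : ℕ) (iteratedDeriv 2 (u k)) t = 0 := by
    intro β P F hF hFg V heqn hκsum
    obtain ⟨w, hw⟩ := FRKNAux.vandermonde_solve hc
      (fun m : Fin s => β ^ ((m : ℕ) + P) * (((m : ℕ).factorial : ℕ) : ℝ)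
        / ((((m : ℕ) + P).factorial : ℕ) : ℝ))
    have hκ : β ^ (P + s) * ((s.factorial : ℕ) : ℝ) / (((P + s).factorial : ℕ) : ℝ)
        - ∑ j, w j * c j ^ s ≠ 0 := by
      rw [FRKNAux.kappa_eq c w β P hw]
      exact hκsum
    exact FRKNAux.core hs c hc u husm β P F hF hFg w hw hκ q hqpos hqtend V heqn
  have hopt := FRKNAux.exists_kappa hc
  have hdisj : (Polynomial.derivative (FRKNAux.FP c)).eval 1 ≠ 0
      ∨ (FRKNAux.FP c).eval 1 ≠ 0 ∨ ∃ i, (FRKNAux.FP c).eval (c i) ≠ 0 := by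
    by_contra hcon
    push_neg at hcon
    exact hopt ⟨hcon.2.1, hcon.1, hcon.2.2⟩
  rcases hdisj with hcase | hcase | ⟨i, hcase⟩
  · -- use the second fitted equation : β = 1, P = 1, F = deriv ∘ u
    refine instantiate 1 1 (fun k => deriv (u k))
      (fun k => FRKNAux.smooth_deriv (husm k)) ?_ (fun n => d (q n)) ?_ ?_
    · intro k
      rw [show (1 : ℕ) = 0 + 1 from rfl, iteratedDeriv_succ', iteratedDeriv_zero,
        FRKNAux.iter2_eq]
    · intro n t k
      have h := ((hqmem n).2 t k).2.1
      simp only [hg2 k] at h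
      simp only [one_mul, Finset.sum_range_succ, Finset.sum_range_zero, iteratedDeriv_zero]
      rw [h]
      simp [Nat.factorial]
    · rw [← FRKNAux.eval_FP_deriv c 1]
      exact hcase
  · -- first fitted equation : β = 1, P = 2, F = u
    refine instantiate 1 2 u husm (fun k => rfl) (fun n => b (q n)) ?_ ?_
    · intro n t k
      have h := ((hqmem n).2 t k).1
      simp only [hg2 k] at h
      simp only [one_mul, Finset.sum_range_succ, Finset.sum_range_zero,
        iteratedDeriv_zero, iteratedDeriv_one]
      rw [h]
      simp [Nat.factorial]
    · rw [← FRKNAux.eval_FP c 1]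
      exact hcase
  · -- stage equation i : β = c i, P = 2, F = u
    refine instantiate (c i) 2 u husm (fun k => rfl) (fun n => A (q n) i) ?_ ?_
    · intro n t k
      have h := ((hqmem n).2 t k).2.2 i
      simp only [hg2 k] at h
      simp only [Finset.sum_range_succ, Finset.sum_range_zero,
        iteratedDeriv_zero, iteratedDeriv_one]
      rw [h]
      simp [Nat.factorial]
    · rw [← FRKNAux.eval_FP c (c i)]
      exact hcase
end

section
/- Let s ≥ 1, c₁,…,c_s ∈ [0,1], and L₀, G > 0. Then there exists a constant C > 0, depending only on s, L₀ and G, such that: for every h ∈ (0,1], every pair of continuous functions L, g : [0,h] → ℝ with |L(t)| ≤ L₀ and |g(t)| ≤ G on [0,h], and every twice continuously differentiable R : [0,h] → ℝ with R(0) = R'(0) = 0 and R''(t) = L(t)·R(t) + g(t)·∏_{i=1}^s (t − c_i h) for all t ∈ [0,h], one has |R(t)| ≤ C·h^{s+2} and |R'(t)| ≤ C·h^{s+1} for all t ∈ [0,h]. -/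
/-!
Write the equation for `R` as a first-order system for `(R, R')`. In the sup norm its right-hand
side is bounded by `max 1 L₀ * ‖(R, R')‖ + G h^s`, because `|t - cᵢ h| ≤ h` on `[0, h]`. Since the
system starts at `0`, Grönwall's inequality bounds `|R'|` on `[0, h]` by `G h^s · t · e^{max 1 L₀ t}`,
which is `O(h^{s+1})`; integrating once more gives `|R| = O(h^{s+2})`.
-/

open Set

theorem Real.exp_sub_one_le_mul_exp (y : ℝ) : Real.exp y - 1 ≤ y * Real.exp y := by
  have h := mul_le_mul_of_nonneg_left (Real.add_one_le_exp (-y)) (Real.exp_pos y).le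
  rw [Real.exp_neg, mul_inv_cancel₀ (Real.exp_pos y).ne'] at h
  linarith

theorem gronwallBound_zero_le {K ε : ℝ} (hK : 0 ≤ K) (hε : 0 ≤ ε) (x : ℝ) :
    gronwallBound 0 K ε x ≤ ε * x * Real.exp (K * x) := by
  rcases hK.eq_or_lt with rfl | hK
  · simp [gronwallBound_K0]
  · simp only [gronwallBound_of_K_ne_0 hK.ne', zero_mul, zero_add]
    calc ε / K * (Real.exp (K * x) - 1)
        ≤ ε / K * (K * x * Real.exp (K * x)) := by
          gcongr
          exact Real.exp_sub_one_le_mul_exp _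
      _ = ε * x * Real.exp (K * x) := by field_simp

theorem abs_prod_sub_mul_le_pow {ι : Type*} [Fintype ι] {c : ι → ℝ}
    (hc : ∀ i, c i ∈ Icc (0 : ℝ) 1) {h t : ℝ} (ht : t ∈ Icc 0 h) :
    |∏ i, (t - c i * h)| ≤ h ^ Fintype.card ι := by
  have h0 : 0 ≤ h := ht.1.trans ht.2
  rw [Finset.abs_prod]
  calc ∏ i, |t - c i * h|
      ≤ ∏ _i : ι, h := Finset.prod_le_prod (fun i _ => abs_nonneg _) fun i _ =>
        abs_sub_le_of_nonneg_of_le ht.1 ht.2 (mul_nonneg (hc i).1 h0)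
          (mul_le_of_le_one_left h0 (hc i).2)
    _ = h ^ Fintype.card ι := by rw [Finset.prod_const, Finset.card_univ]

/-- Grönwall's inequality for the pair `(R, R')` in the sup norm; `1 ≤ K` absorbs `|R'|`. -/
theorem abs_deriv_le_gronwallBound_of_abs_second_deriv_le {R R' R'' : ℝ → ℝ} {a b K ε : ℝ}
    (hK : 1 ≤ K) (hε : 0 ≤ ε)
    (hR : ∀ t ∈ Icc a b, HasDerivAt R (R' t) t) (hR' : ∀ t ∈ Icc a b, HasDerivAt R' (R'' t) t)
    (ha : R a = 0) (ha' : R' a = 0) (bound : ∀ t ∈ Ico a b, |R'' t| ≤ K * |R t| + ε) :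
    ∀ t ∈ Icc a b, |R' t| ≤ gronwallBound 0 K ε (t - a) := by
  have hpair : ∀ t ∈ Icc a b, ‖(R t, R' t)‖ ≤ gronwallBound 0 K ε (t - a) := by
    refine norm_le_gronwallBound_of_norm_deriv_right_le (f' := fun t => (R' t, R'' t))
      (fun t ht => ((hR t ht).prodMk (hR' t ht)).continuousAt.continuousWithinAt)
      (fun t ht => ((hR t (Ico_subset_Icc_self ht)).prodMk
        (hR' t (Ico_subset_Icc_self ht))).hasDerivWithinAt)
      (by simp [ha, ha']) fun t ht => ?_
    simp only [Prod.norm_def, Real.norm_eq_abs]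
    have hmax : 0 ≤ max |R t| |R' t| := le_max_of_le_left (abs_nonneg _)
    refine max_le ?_ ?_
    · nlinarith [le_max_right |R t| |R' t|]
    · nlinarith [bound t ht, le_max_left |R t| |R' t|]
  intro t ht
  exact (le_max_right _ _).trans ((Prod.norm_def _).symm.le.trans (hpair t ht))

theorem abs_le_mul_sub_of_abs_deriv_le {R R' : ℝ → ℝ} {a b M : ℝ}
    (hR : ∀ t ∈ Icc a b, HasDerivAt R (R' t) t) (ha : R a = 0)
    (bound : ∀ t ∈ Icc a b, |R' t| ≤ M) : ∀ t ∈ Icc a b, |R t| ≤ M * (t - a) := by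
  intro t ht
  simpa [ha] using norm_image_sub_le_of_norm_deriv_le_segment'
    (fun x hx => (hR x hx).hasDerivWithinAt) (fun x hx => bound x (Ico_subset_Icc_self hx)) t ht

theorem stmt_10_general (s : ℕ) (L₀ G : ℝ) (hG : 0 < G) :
    ∃ C > 0, ∀ c : Fin s → ℝ, (∀ i, c i ∈ Set.Icc (0 : ℝ) 1) →
      ∀ h ∈ Set.Ioc (0 : ℝ) 1, ∀ L g R R' : ℝ → ℝ,
        ContinuousOn L (Set.Icc 0 h) → ContinuousOn g (Set.Icc 0 h) →
        (∀ t ∈ Set.Icc (0 : ℝ) h, |L t| ≤ L₀) →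
        (∀ t ∈ Set.Icc (0 : ℝ) h, |g t| ≤ G) →
        R 0 = 0 → R' 0 = 0 →
        (∀ t ∈ Set.Icc (0 : ℝ) h, HasDerivAt R (R' t) t) →
        (∀ t ∈ Set.Icc (0 : ℝ) h,
          HasDerivAt R' (L t * R t + g t * ∏ i, (t - c i * h)) t) →
        ∀ t ∈ Set.Icc (0 : ℝ) h,
          |R t| ≤ C * h ^ (s + 2) ∧ |R' t| ≤ C * h ^ (s + 1) := by
  set K := max 1 L₀
  have hK : 0 ≤ K := zero_le_one.trans (le_max_left _ _)
  refine ⟨G * Real.exp K, by positivity, ?_⟩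
  rintro c hc h ⟨hh0, hh1⟩ L g R R' - - hL hg hR0 hR'0 hR hR'
  have hR''_le : ∀ t ∈ Ico 0 h,
      |L t * R t + g t * ∏ i, (t - c i * h)| ≤ K * |R t| + G * h ^ s := fun t ht =>
    (abs_add_le _ _).trans <| by
      rw [abs_mul, abs_mul]
      have hprod := abs_prod_sub_mul_le_pow hc (Ico_subset_Icc_self ht)
      rw [Fintype.card_fin] at hprod
      gcongr
      · exact (hL t (Ico_subset_Icc_self ht)).trans (le_max_right _ _)
      · exact hg t (Ico_subset_Icc_self ht)
  have hR'_le : ∀ t ∈ Icc 0 h, |R' t| ≤ G * Real.exp K * h ^ (s + 1) := fun t ht =>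
    calc |R' t| ≤ gronwallBound 0 K (G * h ^ s) (t - 0) :=
          abs_deriv_le_gronwallBound_of_abs_second_deriv_le (le_max_left _ _) (by positivity)
            hR hR' hR0 hR'0 hR''_le t ht
      _ ≤ G * h ^ s * t * Real.exp (K * t) := by
          rw [sub_zero]; exact gronwallBound_zero_le hK (by positivity) t
      _ ≤ G * h ^ s * h * Real.exp K := by
          gcongr
          · exact ht.2
          · exact mul_le_of_le_one_right hK (ht.2.trans hh1)
      _ = G * Real.exp K * h ^ (s + 1) := by ring
  intro t ht
  refine ⟨?_, hR'_le t ht⟩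
  calc |R t| ≤ G * Real.exp K * h ^ (s + 1) * (t - 0) :=
        abs_le_mul_sub_of_abs_deriv_le hR hR0 hR'_le t ht
    _ ≤ G * Real.exp K * h ^ (s + 1) * h := by gcongr; linarith [ht.2]
    _ = G * Real.exp K * h ^ (s + 2) := by ring

theorem stmt_10 (s : ℕ) (hs : 1 ≤ s) (L₀ G : ℝ) (hL₀ : 0 < L₀) (hG : 0 < G) :
    ∃ C > 0, ∀ c : Fin s → ℝ, (∀ i, c i ∈ Set.Icc (0 : ℝ) 1) →
      ∀ h ∈ Set.Ioc (0 : ℝ) 1, ∀ L g R R' : ℝ → ℝ,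
        ContinuousOn L (Set.Icc 0 h) → ContinuousOn g (Set.Icc 0 h) →
        (∀ t ∈ Set.Icc (0 : ℝ) h, |L t| ≤ L₀) →
        (∀ t ∈ Set.Icc (0 : ℝ) h, |g t| ≤ G) →
        R 0 = 0 → R' 0 = 0 →
        (∀ t ∈ Set.Icc (0 : ℝ) h, HasDerivAt R (R' t) t) →
        (∀ t ∈ Set.Icc (0 : ℝ) h,
          HasDerivAt R' (L t * R t + g t * ∏ i, (t - c i * h)) t) →
        ∀ t ∈ Set.Icc (0 : ℝ) h,
          |R t| ≤ C * h ^ (s + 2) ∧ |R' t| ≤ C * h ^ (s + 1) :=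
  stmt_10_general s L₀ G hG
end

section
/- Let m, n be nonnegative integers, let T > 0, let a₁, …, a_n ∈ [0,T] be distinct, and let f : [0,T] → ℝ be (m+n)-times continuously differentiable with f(a_i) = 0 for i = 1,…,n. Then there exists an m-times continuously differentiable function ζ : [0,T] → ℝ such that f(t) = ζ(t)·∏_{i=1}^n (t − a_i) for all t ∈ [0,T]. -/
/-!
A `C^k` function on `[0, T]` extends to a `C^k` function on `ℝ`: extend its `k`-th derivative
continuously by constants and integrate `k` times. On `ℝ`, Hadamard's lemma
`f t = (t - a) • ∫₀¹ f' (a + (t - a) x) dx` divides out a zero `a` at the cost of one derivative,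
the integral being `C^k` by differentiation under the integral sign. Dividing out the zeros one
at a time gives `ζ`.
-/

open Set Filter Topology MeasureTheory

variable {E : Type*} [NormedAddCommGroup E] [NormedSpace ℝ E]

theorem exists_contDiff_extension_Icc [CompleteSpace E] {k : ℕ} {a b : ℝ} (hab : a < b)
    {f : ℝ → E} (hf : ContDiffOn ℝ k f (Icc a b)) :
    ∃ F : ℝ → E, ContDiff ℝ k F ∧ EqOn F f (Icc a b) := by
  induction k generalizing f with
  | zero =>
    rw [CharP.cast_eq_zero, contDiffOn_zero] at hf
    refine ⟨fun t => f (projIcc a b hab.le t), ?_, fun t ht => by simp [projIcc_of_mem hab.le ht]⟩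
    exact contDiff_zero.2 <| hf.comp_continuous (continuous_subtype_val.comp continuous_projIcc)
      fun t => (projIcc a b hab.le t).2
  | succ k ih =>
    rw [Nat.cast_succ, contDiffOn_succ_iff_derivWithin (uniqueDiffOn_Icc hab)] at hf
    obtain ⟨hdiff, -, hderiv⟩ := hf
    obtain ⟨G, hG, hGf⟩ := ih hderiv
    have hFG : ∀ t, HasDerivAt (fun t => f a + ∫ x in a..t, G x) (G t) t := fun t =>
      (hG.continuous.integral_hasStrictDerivAt a t).hasDerivAt.const_add (f a)
    refine ⟨fun t => f a + ∫ x in a..t, G x, ?_, fun t ht => ?_⟩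
    · rw [Nat.cast_succ, contDiff_succ_iff_deriv]
      refine ⟨fun t => (hFG t).differentiableAt, by simp, ?_⟩
      rwa [funext fun t => (hFG t).deriv]
    · have hfG : ∀ x ∈ Ioo a t, HasDerivAt f (G x) x := fun x hx => by
        have hI : Icc a b ∈ 𝓝 x := Icc_mem_nhds hx.1 (hx.2.trans_le ht.2)
        rw [hGf (Ioo_subset_Icc_self ⟨hx.1, hx.2.trans_le ht.2⟩), derivWithin_of_mem_nhds hI]
        exact ((hdiff x (mem_of_mem_nhds hI)).differentiableAt hI).hasDerivAt
      show f a + _ = f t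
      rw [intervalIntegral.integral_eq_sub_of_hasDerivAt_of_le ht.1
        (hdiff.continuousOn.mono (Icc_subset_Icc_right ht.2)) hfG
        (hG.continuous.intervalIntegrable _ _), add_sub_cancel]

theorem hasDerivAt_integral_smul_comp_affine {w : ℝ → ℝ} (hw : Continuous w) {f : ℝ → E}
    (hf : ContDiff ℝ 1 f) (a t : ℝ) :
    HasDerivAt (fun s => ∫ x in (0:ℝ)..1, w x • f (a + (s - a) * x))
      (∫ x in (0:ℝ)..1, (x * w x) • deriv f (a + (t - a) * x)) t := by
  obtain ⟨C, hC⟩ := (isCompact_Icc.prod (isCompact_closedBall t 1)).exists_bound_of_continuousOn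
    (f := fun p : ℝ × ℝ => (p.1 * w p.1) • deriv f (a + (p.2 - a) * p.1)) (by fun_prop)
  refine (intervalIntegral.hasDerivAt_integral_of_dominated_loc_of_deriv_le (bound := fun _ => C)
    (F := fun s x => w x • f (a + (s - a) * x))
    (F' := fun s x => (x * w x) • deriv f (a + (s - a) * x)) (Metric.ball_mem_nhds t one_pos)
    (Eventually.of_forall fun s => ?_) ?_ ?_ ?_ (intervalIntegrable_const (μ := volume)) ?_).2
  · exact (by fun_prop : Continuous fun x => w x • f (a + (s - a) * x)).aestronglyMeasurable
  · exact (by fun_prop : Continuous fun x => w x • f (a + (t - a) * x)).intervalIntegrable 0 1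
  · exact (by fun_prop :
      Continuous fun x => (x * w x) • deriv f (a + (t - a) * x)).aestronglyMeasurable
  · refine ae_of_all _ fun x hx s hs => hC (x, s) ⟨?_, Metric.ball_subset_closedBall hs⟩
    rw [uIoc_of_le zero_le_one] at hx
    exact Ioc_subset_Icc_self hx
  · refine ae_of_all _ fun x _ s _ => ?_
    have hlin : HasDerivAt (fun s => a + (s - a) * x) x s := by
      simpa using (((hasDerivAt_id s).sub_const a).mul_const x).const_add a
    exact (((hf.differentiable one_ne_zero _).hasDerivAt.scomp s hlin).const_smul (w x)).congr_deriv
      (by rw [smul_smul, mul_comm])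

theorem contDiff_integral_smul_comp_affine {k : ℕ} {w : ℝ → ℝ} (hw : Continuous w) {f : ℝ → E}
    (hf : ContDiff ℝ k f) (a : ℝ) :
    ContDiff ℝ k (fun s => ∫ x in (0:ℝ)..1, w x • f (a + (s - a) * x)) := by
  induction k generalizing w f with
  | zero =>
    rw [CharP.cast_eq_zero, contDiff_zero] at hf ⊢
    exact intervalIntegral.continuous_parametric_intervalIntegral_of_continuous' (by fun_prop) 0 1
  | succ k ih =>
    have hderiv := hasDerivAt_integral_smul_comp_affine hw (hf.of_le (by norm_cast; omega)) a
    rw [Nat.cast_succ, contDiff_succ_iff_deriv] at hf ⊢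
    refine ⟨fun t => (hderiv t).differentiableAt, by simp, ?_⟩
    rw [funext fun t => (hderiv t).deriv]
    exact ih (by fun_prop) hf.2.2

theorem exists_contDiff_eq_sub_smul_of_contDiff [CompleteSpace E] {k : ℕ} {f : ℝ → E}
    (hf : ContDiff ℝ (k + 1 : ℕ) f) {a : ℝ} (ha : f a = 0) :
    ∃ g : ℝ → E, ContDiff ℝ k g ∧ ∀ t, f t = (t - a) • g t := by
  rw [Nat.cast_succ, contDiff_succ_iff_deriv] at hf
  obtain ⟨hdiff, -, hderiv⟩ := hf
  refine ⟨fun t => ∫ x in (0:ℝ)..1, deriv f (a + (t - a) * x), ?_, fun t => ?_⟩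
  · simpa only [one_smul] using
      contDiff_integral_smul_comp_affine (w := fun _ => 1) continuous_const hderiv a
  · rw [intervalIntegral.smul_integral_comp_add_mul, mul_zero, add_zero, mul_one, add_sub_cancel,
      intervalIntegral.integral_deriv_eq_sub (fun x _ => hdiff x)
        (hderiv.continuous.intervalIntegrable _ _), ha, sub_zero]

theorem exists_contDiff_eq_prod_sub_smul_of_contDiff [CompleteSpace E] {k : ℕ} (s : Finset ℝ)
    {f : ℝ → E} (hf : ContDiff ℝ (k + s.card : ℕ) f) (hs : ∀ x ∈ s, f x = 0) :
    ∃ ζ : ℝ → E, ContDiff ℝ k ζ ∧ ∀ t, f t = (∏ x ∈ s, (t - x)) • ζ t := by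
  induction s using Finset.induction_on generalizing f with
  | empty => exact ⟨f, by simpa using hf, fun t => by simp⟩
  | insert b s hb ih =>
    rw [Finset.card_insert_of_notMem hb, ← add_assoc] at hf
    obtain ⟨g, hg, hfg⟩ := exists_contDiff_eq_sub_smul_of_contDiff hf (hs b (s.mem_insert_self b))
    have hgs : ∀ x ∈ s, g x = 0 := fun x hx => by
      have hxb : x - b ≠ 0 := sub_ne_zero.2 (ne_of_mem_of_not_mem hx hb)
      simpa [hxb, hs x (Finset.mem_insert_of_mem hx)] using (hfg x).symm
    obtain ⟨ζ, hζ, hgζ⟩ := ih hg hgs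
    exact ⟨ζ, hζ, fun t => by rw [hfg, hgζ, Finset.prod_insert hb, mul_smul]⟩

theorem stmt_11 (m n : ℕ) (T : ℝ) (hT : 0 < T) (a : Fin n → ℝ)
    (ha : Function.Injective a) (haT : ∀ i, a i ∈ Set.Icc (0 : ℝ) T)
    (f : ℝ → ℝ) (hf : ContDiffOn ℝ (m + n : ℕ) f (Set.Icc 0 T))
    (hz : ∀ i, f (a i) = 0) :
    ∃ ζ : ℝ → ℝ, ContDiffOn ℝ (m : ℕ) ζ (Set.Icc 0 T) ∧
      ∀ t ∈ Set.Icc (0 : ℝ) T, f t = ζ t * ∏ i, (t - a i) := by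
  obtain ⟨F, hF, hFf⟩ := exists_contDiff_extension_Icc hT hf
  have hcard : (Finset.univ.image a).card = n := by
    rw [Finset.card_image_of_injective _ ha, Finset.card_fin]
  have hFa : ∀ x ∈ Finset.univ.image a, F x = 0 := by
    simpa [hFf (haT _)] using hz
  obtain ⟨ζ, hζ, hFζ⟩ := exists_contDiff_eq_prod_sub_smul_of_contDiff _ (hcard ▸ hF) hFa
  refine ⟨ζ, hζ.contDiffOn, fun t ht => ?_⟩
  rw [← hFf ht, hFζ, Finset.prod_image fun i _ j _ h => ha h, smul_eq_mul, mul_comm]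
end

section
/- Let s ≥ 1, n = s+2, S ∈ ℝ^{n×n}, u₀ ∈ ℝⁿ, c₁,…,c_s ∈ ℝ, h > 0, z ∈ ℝ, and y₀, y₀' ∈ ℝ. Let W ∈ ℝ^{n×n} be the matrix whose columns are u₀, S·u₀, and ((hS)² − z·I)·exp(c_i h S)·u₀ for i = 1,…,s, and assume W is invertible. Define the row vector μᵀ := (y₀, y₀', 0, …, 0)·W^{-1} and the function u(t) := μᵀ·exp(tS)·u₀. Then u(0) = y₀, u'(0) = y₀', h²·u''(c_i h) = z·u(c_i h) for i = 1,…,s, and the vector (u(h), h·u'(h))ᵀ equals M·(y₀, h·y₀')ᵀ, where M is the 2×2 matrix with entries M₁₁ = e₁ᵀW^{-1}exp(hS)u₀, M₁₂ = h^{-1}·e₂ᵀW^{-1}exp(hS)u₀, M₂₁ = h·e₁ᵀW^{-1}S·exp(hS)u₀, M₂₂ = e₂ᵀW^{-1}S·exp(hS)u₀, with e₁, e₂ the first two standard basis vectors of ℝⁿ. -/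
open Matrix BigOperators

/-! Pairing `μ` with the columns of `W` gives `u(0)`, `u'(0)` and the collocation residuals
`h² u''(cᵢ h) - z u(cᵢ h)`; since `μᵀ W = (y₀, y₀', 0, …, 0)`, these are `y₀`, `y₀'` and `0`.
For the step map, `μᵀ x = (y₀, y₀', 0, …, 0) W⁻¹ x` is linear in `(y₀, y₀')` with coefficients the
first two entries of `W⁻¹ x`. -/

section

variable {n R : Type*} [Fintype n] [DecidableEq n] [CommRing R]

theorem Matrix.vecMul_nonsing_inv_dotProduct_col (f : n → n → R)
    (hf : IsUnit (of f)ᵀ.det) (v : n → R) (j : n) : (v ᵥ* (of f)ᵀ⁻¹) ⬝ᵥ f j = v j := by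
  have hv : v ᵥ* (of f)ᵀ⁻¹ ᵥ* (of f)ᵀ = v := by
    rw [vecMul_vecMul, nonsing_inv_mul _ hf, vecMul_one]
  exact congrFun hv j

theorem Matrix.dotProduct_sq_sub_smul_one_mulVec (μ x : n → R) (S : Matrix n n R) (h z : R) :
    μ ⬝ᵥ (((h • S) ^ 2 - z • (1 : Matrix n n R)) *ᵥ x)
      = h ^ 2 * μ ⬝ᵥ (S *ᵥ S *ᵥ x) - z * μ ⬝ᵥ x := by
  rw [smul_pow, sq S, sub_mulVec, smul_mulVec, smul_mulVec, one_mulVec, ← mulVec_mulVec,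
    dotProduct_sub, dotProduct_smul, dotProduct_smul, smul_eq_mul, smul_eq_mul]

end

theorem Fin.cons_cons_zero_dotProduct {R : Type*} [CommSemiring R] {s : ℕ} (a b : R)
    (x : Fin (s + 2) → R) :
    (Fin.cons a (Fin.cons b (0 : Fin s → R)) : Fin (s + 2) → R) ⬝ᵥ x = a * x 0 + b * x 1 := by
  simp [dotProduct, Fin.sum_univ_succ]

theorem stmt_14_general (s : ℕ)
    (S : Matrix (Fin (s + 2)) (Fin (s + 2)) ℝ) (u₀ : Fin (s + 2) → ℝ)
    (c : Fin s → ℝ) (h : ℝ) (hh : 0 < h) (z y₀ y₀' : ℝ)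
    (W : Matrix (Fin (s + 2)) (Fin (s + 2)) ℝ)
    (hW : W = (Matrix.of
      (Fin.cons u₀ (Fin.cons (S *ᵥ u₀) fun i : Fin s =>
        ((h • S) ^ 2 - z • (1 : Matrix (Fin (s + 2)) (Fin (s + 2)) ℝ)) *ᵥ
          (NormedSpace.exp ((c i * h) • S) *ᵥ u₀))))ᵀ)
    (hWinv : IsUnit W.det)
    (μ : Fin (s + 2) → ℝ)
    (hμ : μ = (Fin.cons y₀ (Fin.cons y₀' (0 : Fin s → ℝ)) : Fin (s + 2) → ℝ) ᵥ* W⁻¹)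
    (uu uu' uu'' : ℝ → ℝ)
    (huu : uu = fun t => μ ⬝ᵥ (NormedSpace.exp (t • S) *ᵥ u₀))
    (huu' : uu' = fun t => μ ⬝ᵥ (S *ᵥ (NormedSpace.exp (t • S) *ᵥ u₀)))
    (huu'' : uu'' = fun t => μ ⬝ᵥ (S *ᵥ S *ᵥ (NormedSpace.exp (t • S) *ᵥ u₀))) :
    uu 0 = y₀ ∧ uu' 0 = y₀' ∧
    (∀ i, h ^ 2 * uu'' (c i * h) = z * uu (c i * h)) ∧
    uu h = (W⁻¹ *ᵥ (NormedSpace.exp (h • S) *ᵥ u₀)) 0 * y₀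
        + (h⁻¹ * (W⁻¹ *ᵥ (NormedSpace.exp (h • S) *ᵥ u₀)) 1) * (h * y₀') ∧
    h * uu' h = (h * (W⁻¹ *ᵥ (S *ᵥ (NormedSpace.exp (h • S) *ᵥ u₀))) 0) * y₀
        + (W⁻¹ *ᵥ (S *ᵥ (NormedSpace.exp (h • S) *ᵥ u₀))) 1 * (h * y₀') := by
  have hμ_dot (x : Fin (s + 2) → ℝ) : μ ⬝ᵥ x = y₀ * (W⁻¹ *ᵥ x) 0 + y₀' * (W⁻¹ *ᵥ x) 1 := by
    rw [hμ, ← dotProduct_mulVec, Fin.cons_cons_zero_dotProduct]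
  rw [hW] at hWinv hμ
  have hcol := vecMul_nonsing_inv_dotProduct_col _ hWinv
    (Fin.cons y₀ (Fin.cons y₀' (0 : Fin s → ℝ)))
  rw [← hμ] at hcol
  subst huu huu' huu''
  refine ⟨?_, ?_, fun i => ?_, ?_, ?_⟩
  · simpa only [zero_smul, NormedSpace.exp_zero, one_mulVec, Fin.cons_zero] using hcol 0
  · simpa only [zero_smul, NormedSpace.exp_zero, one_mulVec, Fin.cons_one, Fin.cons_zero]
      using hcol 1
  · have hcollocation : μ ⬝ᵥ (((h • S) ^ 2 - z • 1) *ᵥ (NormedSpace.exp ((c i * h) • S) *ᵥ u₀)) = 0 :=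
      hcol i.succ.succ
    rw [dotProduct_sq_sub_smul_one_mulVec] at hcollocation
    linarith
  · simp only [hμ_dot]
    field_simp
  · simp only [hμ_dot]
    field_simp

theorem stmt_14 (s : ℕ) (hs : 1 ≤ s)
    (S : Matrix (Fin (s + 2)) (Fin (s + 2)) ℝ) (u₀ : Fin (s + 2) → ℝ)
    (c : Fin s → ℝ) (h : ℝ) (hh : 0 < h) (z y₀ y₀' : ℝ)
    (W : Matrix (Fin (s + 2)) (Fin (s + 2)) ℝ)
    (hW : W = (Matrix.of
      (Fin.cons u₀ (Fin.cons (S *ᵥ u₀) fun i : Fin s =>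
        ((h • S) ^ 2 - z • (1 : Matrix (Fin (s + 2)) (Fin (s + 2)) ℝ)) *ᵥ
          (NormedSpace.exp ((c i * h) • S) *ᵥ u₀))))ᵀ)
    (hWinv : IsUnit W.det)
    (μ : Fin (s + 2) → ℝ)
    (hμ : μ = (Fin.cons y₀ (Fin.cons y₀' (0 : Fin s → ℝ)) : Fin (s + 2) → ℝ) ᵥ* W⁻¹)
    (uu uu' uu'' : ℝ → ℝ)
    (huu : uu = fun t => μ ⬝ᵥ (NormedSpace.exp (t • S) *ᵥ u₀))
    (huu' : uu' = fun t => μ ⬝ᵥ (S *ᵥ (NormedSpace.exp (t • S) *ᵥ u₀)))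
    (huu'' : uu'' = fun t => μ ⬝ᵥ (S *ᵥ S *ᵥ (NormedSpace.exp (t • S) *ᵥ u₀))) :
    uu 0 = y₀ ∧ uu' 0 = y₀' ∧
    (∀ i, h ^ 2 * uu'' (c i * h) = z * uu (c i * h)) ∧
    uu h = (W⁻¹ *ᵥ (NormedSpace.exp (h • S) *ᵥ u₀)) 0 * y₀
        + (h⁻¹ * (W⁻¹ *ᵥ (NormedSpace.exp (h • S) *ᵥ u₀)) 1) * (h * y₀') ∧
    h * uu' h = (h * (W⁻¹ *ᵥ (S *ᵥ (NormedSpace.exp (h • S) *ᵥ u₀))) 0) * y₀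
        + (W⁻¹ *ᵥ (S *ᵥ (NormedSpace.exp (h • S) *ᵥ u₀))) 1 * (h * y₀') :=
  stmt_14_general s S u₀ c h hh z y₀ y₀' W hW hWinv μ hμ uu uu' uu'' huu huu' huu''
end

section
/- Let c₁, c₂, ν ∈ ℝ with ν ≠ 0 and sin((c₁−c₂)ν) ≠ 0. Then the vector d = (d₁, d₂) with d₁ = (cos(c₂ν) − cos((1−c₂)ν))/(ν·sin((c₁−c₂)ν)) and d₂ = (cos((1−c₁)ν) − cos(c₁ν))/(ν·sin((c₁−c₂)ν)) is the unique solution of the pair of equations ν·(d₁·sin(c₁ν) + d₂·sin(c₂ν)) = 1 − cos ν and ν·(d₁·cos(c₁ν) + d₂·cos(c₂ν)) = sin ν. -/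
/-!
Dividing by `ν`, the two conditions form a 2 × 2 linear system in `(d₁, d₂)` whose determinant
`sin (c₁ν) cos (c₂ν) - sin (c₂ν) cos (c₁ν)` equals `sin ((c₁ - c₂)ν)`, so Cramer's rule gives the
unique solution; the addition formula `cos ((1 - c)ν) = cos ν cos (cν) + sin ν sin (cν)` puts it in
the stated form.
-/

open Real

theorem linear_system_two_iff {K : Type*} [Field K] {a b c d p q x y : K}
    (hdet : a * d - b * c ≠ 0) :
    x * a + y * b = p ∧ x * c + y * d = q ↔
      x = (p * d - b * q) / (a * d - b * c) ∧ y = (a * q - c * p) / (a * d - b * c) := by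
  constructor
  · rintro ⟨rfl, rfl⟩
    constructor <;> rw [eq_div_iff hdet] <;> ring
  · rintro ⟨rfl, rfl⟩
    constructor <;>
      rw [div_mul_eq_mul_div, div_mul_eq_mul_div, ← add_div, div_eq_iff hdet] <;> ring

theorem fitted_weights_iff {c₁ c₂ ν : ℝ} (hν : ν ≠ 0) (hden : sin ((c₁ - c₂) * ν) ≠ 0)
    (e₁ e₂ : ℝ) :
    ν * (e₁ * sin (c₁ * ν) + e₂ * sin (c₂ * ν)) = 1 - cos ν ∧
        ν * (e₁ * cos (c₁ * ν) + e₂ * cos (c₂ * ν)) = sin ν ↔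
      e₁ = (cos (c₂ * ν) - cos ((1 - c₂) * ν)) / (ν * sin ((c₁ - c₂) * ν)) ∧
        e₂ = (cos ((1 - c₁) * ν) - cos (c₁ * ν)) / (ν * sin ((c₁ - c₂) * ν)) := by
  have hdet : sin (c₁ * ν) * cos (c₂ * ν) - sin (c₂ * ν) * cos (c₁ * ν) =
      sin ((c₁ - c₂) * ν) := by
    rw [sub_mul, sin_sub]; ring
  have hcos (c : ℝ) : cos ((1 - c) * ν) = cos ν * cos (c * ν) + sin ν * sin (c * ν) := by
    rw [sub_mul, one_mul, cos_sub]
  rw [mul_comm ν, ← eq_div_iff hν, mul_comm ν, ← eq_div_iff hν,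
    linear_system_two_iff (hdet ▸ hden), hdet, hcos, hcos]
  congr! 2 <;> field_simp <;> ring

theorem stmt_19 (c₁ c₂ ν : ℝ) (hν : ν ≠ 0)
    (hden : Real.sin ((c₁ - c₂) * ν) ≠ 0)
    (d₁ d₂ : ℝ)
    (hd₁ : d₁ = (Real.cos (c₂ * ν) - Real.cos ((1 - c₂) * ν)) /
      (ν * Real.sin ((c₁ - c₂) * ν)))
    (hd₂ : d₂ = (Real.cos ((1 - c₁) * ν) - Real.cos (c₁ * ν)) /
      (ν * Real.sin ((c₁ - c₂) * ν))) :
    (ν * (d₁ * Real.sin (c₁ * ν) + d₂ * Real.sin (c₂ * ν)) = 1 - Real.cos ν) ∧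
    (ν * (d₁ * Real.cos (c₁ * ν) + d₂ * Real.cos (c₂ * ν)) = Real.sin ν) ∧
    ∀ e₁ e₂ : ℝ,
      (ν * (e₁ * Real.sin (c₁ * ν) + e₂ * Real.sin (c₂ * ν)) = 1 - Real.cos ν) →
      (ν * (e₁ * Real.cos (c₁ * ν) + e₂ * Real.cos (c₂ * ν)) = Real.sin ν) →
      e₁ = d₁ ∧ e₂ = d₂ := by
  have hsolves := (fitted_weights_iff hν hden d₁ d₂).2 ⟨hd₁, hd₂⟩
  refine ⟨hsolves.1, hsolves.2, fun e₁ e₂ he₁ he₂ => ?_⟩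
  rw [hd₁, hd₂]
  exact (fitted_weights_iff hν hden e₁ e₂).1 ⟨he₁, he₂⟩
end
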